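/- arXiv:1810.12809 — 5 statements merged into one kernel-verified Lean document; each statement's English description precedes it below -/
import Mathlib

section
/- Fourier slice theorem for the polar Radon transform: for f ∈ L¹(ℝ²), defining R^pol f(θ,t) = ∫_ℝ f(t cos θ − y sin θ, t sin θ + y cos θ) dy, the one-dimensional Fourier transform in the variable t satisfies (I⊗F)(R^pol f)(θ,τ) = F f(τ w(θ)) for all (θ,τ) ∈ [0,π) × ℝ, where w(θ) = (cos θ, sin θ) and F is the 2D Fourier transform. -/
open MeasureTheory Set

/-- The polar Radon transform. -/
noncomputable def Rpol (f : ℝ × ℝ → ℂ) (θ t : ℝ) : ℂ :=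
  ∫ y : ℝ, f (t * Real.cos θ - y * Real.sin θ, t * Real.sin θ + y * Real.cos θ)

/-- The 2D Fourier transform `F f(ξ) = ∫ f(x) e^{-2πi ξ·x} dx`. -/
noncomputable def FT2 (f : ℝ × ℝ → ℂ) (ξ : ℝ × ℝ) : ℂ :=
  ∫ x : ℝ × ℝ, f x * Complex.exp (((-2) * Real.pi * (ξ.1 * x.1 + ξ.2 * x.2) : ℝ) * Complex.I)

/-! The slice `t ↦ Rpol f θ t` integrates `f` over the rotated coordinates `(t, y)`, and the
rotation preserves Lebesgue measure, so Fubini turns the Fourier transform of the slice into the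
2D Fourier transform; the phase matches because `w(θ) · rot θ (t, y) = t`. -/

noncomputable def rotEquiv (θ : ℝ) : (ℝ × ℝ) ≃ᵐ (ℝ × ℝ) :=
  Complex.measurableEquivRealProd.symm.trans
    ((rotation (Circle.exp θ)).toHomeomorph.toMeasurableEquiv.trans
      Complex.measurableEquivRealProd)

theorem rotEquiv_apply (θ : ℝ) (p : ℝ × ℝ) :
    rotEquiv θ p = (p.1 * Real.cos θ - p.2 * Real.sin θ,
      p.1 * Real.sin θ + p.2 * Real.cos θ) := by
  simp only [rotEquiv, MeasurableEquiv.trans_apply, Homeomorph.toMeasurableEquiv_coe,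
    LinearIsometryEquiv.coe_toHomeomorph, rotation_apply, Circle.coe_exp,
    Complex.measurableEquivRealProd_apply, Complex.measurableEquivRealProd_symm_apply,
    Complex.exp_mul_I]
  apply Prod.ext <;>
    simp [Complex.mul_re, Complex.mul_im, Complex.cos_ofReal_re, Complex.sin_ofReal_re] <;> ring

theorem measurePreserving_rotEquiv (θ : ℝ) : MeasurePreserving (rotEquiv θ) :=
  Complex.volume_preserving_equiv_real_prod.comp
    ((rotation (Circle.exp θ)).measurePreserving.comp
      Complex.volume_preserving_equiv_real_prod.symm)

theorem integral_integral_comp_rotEquiv {E : Type*} [NormedAddCommGroup E] [NormedSpace ℝ E]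
    {g : ℝ × ℝ → E} (hg : Integrable g) (θ : ℝ) :
    ∫ t : ℝ, ∫ y : ℝ, g (rotEquiv θ (t, y)) = ∫ x : ℝ × ℝ, g x := by
  have hrot := measurePreserving_rotEquiv θ
  have hemb := (rotEquiv θ).measurableEmbedding
  rw [integral_integral (f := fun t y => g (rotEquiv θ (t, y)))
    ((hrot.integrable_comp_emb hemb).2 hg)]
  exact hrot.integral_comp hemb g

theorem Rpol_eq_integral_comp_rotEquiv (f : ℝ × ℝ → ℂ) (θ t : ℝ) :
    Rpol f θ t = ∫ y : ℝ, f (rotEquiv θ (t, y)) := by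
  simp only [Rpol, rotEquiv_apply]

theorem cos_mul_rotEquiv_fst_add_sin_mul_rotEquiv_snd (θ : ℝ) (p : ℝ × ℝ) :
    Real.cos θ * (rotEquiv θ p).1 + Real.sin θ * (rotEquiv θ p).2 = p.1 := by
  rw [rotEquiv_apply]
  linear_combination p.1 * Real.sin_sq_add_cos_sq θ

theorem MeasureTheory.Integrable.mul_exp_ofReal_mul_I {α : Type*} [MeasurableSpace α]
    {μ : Measure α} {f : α → ℂ} (hf : Integrable f μ) {φ : α → ℝ} (hφ : Measurable φ) :
    Integrable (fun x => f x * Complex.exp (φ x * Complex.I)) μ := by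
  refine hf.mul_bdd (c := 1) (by fun_prop : Measurable _).aestronglyMeasurable (Filter.Eventually.of_forall fun x => ?_)
  rw [Complex.norm_exp_ofReal_mul_I]

theorem fourier_slice_polar_general (f : ℝ × ℝ → ℂ) (hf : Integrable f)
    (θ : ℝ) (τ : ℝ) :
    ∫ t : ℝ, Rpol f θ t * Complex.exp (((-2) * Real.pi * (τ * t) : ℝ) * Complex.I)
      = FT2 f (τ * Real.cos θ, τ * Real.sin θ) := by
  set G : ℝ × ℝ → ℂ := fun x => f x * Complex.exp
    (((-2) * Real.pi * ((τ * Real.cos θ) * x.1 + (τ * Real.sin θ) * x.2) : ℝ) * Complex.I)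
  have hG : Integrable G := hf.mul_exp_ofReal_mul_I (by fun_prop)
  have hphase (t y : ℝ) : G (rotEquiv θ (t, y)) = f (rotEquiv θ (t, y)) *
      Complex.exp (((-2) * Real.pi * (τ * t) : ℝ) * Complex.I) := by
    simp only [G, mul_assoc, ← mul_add, cos_mul_rotEquiv_fst_add_sin_mul_rotEquiv_snd]
  calc ∫ t : ℝ, Rpol f θ t * Complex.exp (((-2) * Real.pi * (τ * t) : ℝ) * Complex.I)
      = ∫ t : ℝ, ∫ y : ℝ, G (rotEquiv θ (t, y)) := by
        simp only [hphase, Rpol_eq_integral_comp_rotEquiv, integral_mul_const]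
    _ = FT2 f (τ * Real.cos θ, τ * Real.sin θ) := integral_integral_comp_rotEquiv hG θ

/-- Fourier slice theorem for the polar Radon transform: for `f ∈ L¹(ℝ²)`, the
one-dimensional Fourier transform in the variable `t` of `R^pol f` satisfies
`(I⊗F)(R^pol f)(θ,τ) = F f(τ w(θ))` for all `(θ,τ) ∈ [0,π) × ℝ`, `w(θ) = (cos θ, sin θ)`. -/
theorem fourier_slice_polar (f : ℝ × ℝ → ℂ) (hf : Integrable f)
    (θ : ℝ) (hθ : θ ∈ Ico 0 Real.pi) (τ : ℝ) :
    ∫ t : ℝ, Rpol f θ t * Complex.exp (((-2) * Real.pi * (τ * t) : ℝ) * Complex.I)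
      = FT2 f (τ * Real.cos θ, τ * Real.sin θ) :=
  fourier_slice_polar_general f hf θ τ
end

section
/- Let π and π̂ be unitary representations of a group G on Hilbert spaces H and Ĥ, with π irreducible. Let R: A ⊆ H → Ĥ be a closable densely defined operator on a π-invariant dense domain A satisfying R π(g) = χ(g)^{-1} π̂(g) R on A for a character χ of G. Then the closure R̄ of R has π-invariant domain and satisfies R̄ π(g) = χ(g)^{-1} π̂(g) R̄ on dom(R̄), for all g ∈ G. -/
/-!
For fixed `g`, the map `(x, y) ↦ (π g x, χ(g)⁻¹ • π̂ g y)` on `H × Ĥ` is continuous, and the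
intertwining relation says exactly that it maps the graph of `R` into itself. Hence it maps the
closure of that graph, which is the graph of `R̄` since `R` is closable, into itself as well.
-/

namespace LinearPMap

variable {R E F : Type*} [CommRing R] [AddCommGroup E] [AddCommGroup F] [Module R E] [Module R F]

theorem mapsTo_graph_iff (f : E →ₗ.[R] F) (A : E → E) (B : F → F) :
    Set.MapsTo (Prod.map A B) (f.graph : Set (E × F)) f.graph ↔
      ∀ x : f.domain, ∃ hx : A x ∈ f.domain, f ⟨A x, hx⟩ = B (f x) := by
  constructor
  · intro h x
    obtain ⟨⟨y, hy⟩, rfl : y = A x, hfy⟩ := f.mem_graph_iff.1 (h (f.mem_graph x))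
    exact ⟨hy, hfy⟩
  · rintro h ⟨_, _⟩ hp
    obtain ⟨x, rfl, rfl⟩ := f.mem_graph_iff.1 hp
    obtain ⟨hx, hfx⟩ := h x
    exact f.mem_graph_iff.2 ⟨⟨A x, hx⟩, rfl, hfx⟩

variable [TopologicalSpace R] [TopologicalSpace E] [TopologicalSpace F]
  [ContinuousAdd E] [ContinuousAdd F] [ContinuousSMul R E] [ContinuousSMul R F]

theorem IsClosable.closure_intertwining {f : E →ₗ.[R] F} (hf : f.IsClosable) {A : E → E}
    {B : F → F} (hA : Continuous A) (hB : Continuous B)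
    (h : ∀ x : f.domain, ∃ hx : A x ∈ f.domain, f ⟨A x, hx⟩ = B (f x)) :
    ∀ x : f.closure.domain, ∃ hx : A x ∈ f.closure.domain,
      f.closure ⟨A x, hx⟩ = B (f.closure x) := by
  rw [← mapsTo_graph_iff, ← hf.graph_closure_eq_closure_graph, Submodule.topologicalClosure_coe]
  exact ((mapsTo_graph_iff f A B).2 h).closure (hA.prodMap hB)

end LinearPMap

/-- Let `π`, `π̂` be unitary representations of a group `G` on Hilbert spaces `H`, `Ĥ`, with
`π` irreducible. Let `R : A ⊆ H → Ĥ` be a closable densely defined operator with π-invariant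
dense domain `A`, satisfying `R π(g) = χ(g)⁻¹ π̂(g) R` on `A` for a positive character `χ` of
`G`. Then the closure `R̄` of `R` has π-invariant domain and satisfies
`R̄ π(g) = χ(g)⁻¹ π̂(g) R̄` on `dom R̄`, for all `g ∈ G`. -/
theorem closure_intertwining
    {G : Type*} [Group G]
    {H H' : Type*} [NormedAddCommGroup H] [InnerProductSpace ℂ H]
    [NormedAddCommGroup H'] [InnerProductSpace ℂ H']
    (π : G →* (H ≃ₗᵢ[ℂ] H)) (πh : G →* (H' ≃ₗᵢ[ℂ] H'))
    (χ : G → ℝ)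
    (R : H →ₗ.[ℂ] H') (hRclosable : R.IsClosable)
    (hRdominv : ∀ g : G, ∀ x ∈ R.domain, π g x ∈ R.domain)
    (hRint : ∀ g : G, ∀ x : R.domain, ∀ hx' : π g x ∈ R.domain,
      R ⟨π g x, hx'⟩ = ((χ g : ℂ))⁻¹ • πh g (R x)) :
    ∀ g : G, ∀ x : R.closure.domain, ∃ hx' : π g x ∈ R.closure.domain,
      R.closure ⟨π g x, hx'⟩ = ((χ g : ℂ))⁻¹ • πh g (R.closure x) :=
  fun g => hRclosable.closure_intertwining (π g).continuous
    (continuous_const.smul (πh g).continuous)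
    fun x => ⟨hRdominv g x x.2, hRint g x _⟩
end

section
/- Let π be an irreducible unitary representation of G on H and let R be a closable densely defined operator from a nonzero π-invariant subspace A ⊆ H into L²(Ξ) satisfying the intertwining relation R̄π(g) = χ(g)^{-1}π̂(g)R̄ for a character χ, where π̂ is a unitary representation on L²(Ξ). Write R̄ = Q|R̄| for the polar decomposition. Then Q is an isometry from H into L²(Ξ) satisfying π̂(g) Q π(g)^{-1} = Q for all g ∈ G; moreover if π̂ is irreducible then Q is unitary and π and π̂ are unitarily equivalent. -/
open MeasureTheory LinearPMap
open scoped InnerProductSpace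
open scoped Pointwise

noncomputable section

section RadonAux

variable {H : Type*} [NormedAddCommGroup H] [InnerProductSpace ℂ H] [CompleteSpace H]

/-- Polarization: two linear maps with equal norms have equal inner products. -/
lemma radon_aux_polar {E : Type*} [AddCommGroup E] [Module ℂ E]
    {H₁ : Type*} [NormedAddCommGroup H₁] [InnerProductSpace ℂ H₁]
    {H₂ : Type*} [NormedAddCommGroup H₂] [InnerProductSpace ℂ H₂]
    (f : E →ₗ[ℂ] H₁) (g : E →ₗ[ℂ] H₂) (h : ∀ z, ‖f z‖ = ‖g z‖) (x y : E) :
    ⟪f x, f y⟫_ℂ = ⟪g x, g y⟫_ℂ := by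
  rw [inner_eq_sum_norm_sq_div_four, inner_eq_sum_norm_sq_div_four]
  have hI : (RCLike.I : ℂ) = Complex.I := rfl
  rw [hI]
  rw [← f.map_smul, ← g.map_smul, ← f.map_add, ← g.map_add, ← f.map_sub, ← g.map_sub,
    ← f.map_sub, ← g.map_sub, ← f.map_add, ← g.map_add, h, h, h, h]

lemma radon_aux_resolvent (D : Submodule ℂ H) (s : D →ₗ[ℂ] H)
    (hclosed : IsClosed {p : H × H | ∃ h : p.1 ∈ D, s ⟨p.1, h⟩ = p.2})
    (hpos : ∀ x : D, 0 ≤ (⟪(x : H), s x⟫_ℂ).re)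
    (hadj : ∀ u w : H, (∀ x : D, ⟪u, s x⟫_ℂ = ⟪w, (x : H)⟫_ℂ) →
      ∃ hu : u ∈ D, s ⟨u, hu⟩ = w) :
    ∃ P : H →L[ℂ] H, (∀ u, ∃ h : P u ∈ D, s ⟨P u, h⟩ = u - P u) ∧
      (∀ x : D, P ((x : H) + s x) = x) := by
  classical
  set e : D →ₗ[ℂ] H := D.subtype + s with he
  have he_apply : ∀ x : D, e x = (x : H) + s x := fun _ => rfl
  have hre : ∀ x : D, (⟪(x : H), s x⟫_ℂ).re = RCLike.re ⟪(x : H), s x⟫_ℂ := fun _ => rfl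
  have hsq : ∀ x : D, ‖e x‖ ^ 2 = ‖(x : H)‖ ^ 2 + 2 * (⟪(x : H), s x⟫_ℂ).re + ‖s x‖ ^ 2 := by
    intro x; rw [he_apply, hre]; exact norm_add_sq _ _
  have hbound1 : ∀ x : D, ‖(x : H)‖ ≤ ‖e x‖ := by
    intro x
    have h1 : ‖(x : H)‖ ^ 2 ≤ ‖e x‖ ^ 2 := by
      rw [hsq x]; nlinarith [hpos x, sq_nonneg ‖s x‖]
    nlinarith [norm_nonneg (e x), norm_nonneg (x : H)]
  have hbound2 : ∀ x : D, ‖s x‖ ≤ ‖e x‖ := by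
    intro x
    have h1 : ‖s x‖ ^ 2 ≤ ‖e x‖ ^ 2 := by
      rw [hsq x]; nlinarith [hpos x, sq_nonneg ‖(x : H)‖]
    nlinarith [norm_nonneg (e x), norm_nonneg (s x)]
  -- range of e is closed
  have hrange_closed : IsClosed (Set.range e) := by
    rw [← isSeqClosed_iff_isClosed]
    intro v u hv hlim
    -- v n = e (x n); x n and s x n are Cauchy
    choose x hx using fun n => (Set.mem_range.mp (hv n))
    have hcx : CauchySeq fun n => ((x n : H)) := by
      have hc : CauchySeq v := hlim.cauchySeq
      rw [Metric.cauchySeq_iff] at hc ⊢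
      intro ε hε
      obtain ⟨N, hN⟩ := hc ε hε
      exact ⟨N, fun m hm n hn => by
        have : (x m : H) - (x n : H) = ((x m - x n : D) : H) := rfl
        calc dist (x m : H) (x n : H) = ‖((x m - x n : D) : H)‖ := by
              rw [dist_eq_norm]; norm_cast
          _ ≤ ‖e (x m - x n)‖ := hbound1 _
          _ = ‖v m - v n‖ := by rw [_root_.map_sub, hx, hx]
          _ < ε := by rw [← dist_eq_norm]; exact hN m hm n hn⟩
    have hcs : CauchySeq fun n => s (x n) := by
      have hc : CauchySeq v := hlim.cauchySeq
      rw [Metric.cauchySeq_iff] at hc ⊢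
      intro ε hε
      obtain ⟨N, hN⟩ := hc ε hε
      exact ⟨N, fun m hm n hn => by
        calc dist (s (x m)) (s (x n)) = ‖s (x m - x n)‖ := by
              rw [dist_eq_norm, ← _root_.map_sub]
          _ ≤ ‖e (x m - x n)‖ := hbound2 _
          _ = ‖v m - v n‖ := by rw [_root_.map_sub, hx, hx]
          _ < ε := by rw [← dist_eq_norm]; exact hN m hm n hn⟩
    obtain ⟨a, ha⟩ := cauchySeq_tendsto_of_complete hcx
    obtain ⟨b, hb⟩ := cauchySeq_tendsto_of_complete hcs
    have hmem : (a, b) ∈ {p : H × H | ∃ h : p.1 ∈ D, s ⟨p.1, h⟩ = p.2} := by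
      apply hclosed.mem_of_tendsto ((ha.prodMk_nhds hb))
      exact Filter.Eventually.of_forall fun n => ⟨(x n).2, by simp⟩
    obtain ⟨haD, hab⟩ := hmem
    refine ⟨⟨a, haD⟩, ?_⟩
    have : Filter.Tendsto v Filter.atTop (nhds (a + b)) := by
      have := ha.add hb
      convert this using 1
      ext n; rw [← hx n, he_apply]
    have := tendsto_nhds_unique hlim this
    rw [this, he_apply, hab]
  -- e is surjective
  have hesurj : ∀ u : H, ∃ x : D, e x = u := by
    intro u
    have hV : (LinearMap.range e).topologicalClosure = ⊤ := by
      rw [Submodule.topologicalClosure_eq_top_iff]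
      rw [Submodule.eq_bot_iff]
      intro z hz
      have hz' : ∀ x : D, ⟪z, s x⟫_ℂ = ⟪-z, (x : H)⟫_ℂ := by
        intro x
        have := (Submodule.mem_orthogonal _ z).mp hz (e x) (LinearMap.mem_range_self e x)
        have h0 : ⟪e x, z⟫_ℂ = 0 := this
        have : ⟪z, e x⟫_ℂ = 0 := by
          rw [← inner_conj_symm, h0, _root_.map_zero]
        rw [he_apply, inner_add_right] at this
        rw [inner_neg_left]
        linear_combination this
      obtain ⟨hzD, hsz⟩ := hadj z (-z) hz'
      have h1 : (⟪((⟨z, hzD⟩ : D) : H), s ⟨z, hzD⟩⟫_ℂ).re = -(‖z‖ ^ 2) := by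
        rw [hsz]
        simp only [inner_neg_right, Complex.neg_re, neg_inj]
        exact inner_self_eq_norm_sq (𝕜 := ℂ) z
      have h2 := hpos ⟨z, hzD⟩
      rw [h1] at h2
      have : ‖z‖ ^ 2 ≤ 0 := by linarith
      have : ‖z‖ = 0 := by nlinarith [norm_nonneg z, sq_nonneg ‖z‖]
      exact norm_eq_zero.mp this
    have hVc : IsClosed ((LinearMap.range e : Submodule ℂ H) : Set H) := by
      have : ((LinearMap.range e : Submodule ℂ H) : Set H) = Set.range e := by
        ext w; simp [LinearMap.mem_range]
      rw [this]; exact hrange_closed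
    have : (LinearMap.range e) = ⊤ := by
      rw [← hV]
      exact (IsClosed.submodule_topologicalClosure_eq hVc).symm
    have := (LinearMap.range_eq_top.mp this) u
    exact this
  have heinj : Function.Injective e := by
    intro a b hab
    have h0 : e (a - b) = 0 := by rw [_root_.map_sub, hab, sub_self]
    have : ‖((a - b : D) : H)‖ ≤ ‖e (a-b)‖ := hbound1 _
    rw [h0, norm_zero] at this
    have : ((a - b : D) : H) = 0 := norm_le_zero_iff.mp this
    have hab0 : a - b = 0 := Subtype.ext (by rw [Submodule.coe_sub] at this ⊢; exact this)
    exact sub_eq_zero.mp hab0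
  -- construct the inverse
  have hbij : Function.Bijective e := ⟨heinj, fun u => hesurj u⟩
  let eq : D ≃ₗ[ℂ] H := LinearEquiv.ofBijective e hbij
  let P₀ : H →ₗ[ℂ] H := D.subtype.comp eq.symm.toLinearMap
  have hP₀bound : ∀ u, ‖P₀ u‖ ≤ 1 * ‖u‖ := by
    intro u
    have h1 : e (eq.symm u) = u := eq.apply_symm_apply u
    calc ‖P₀ u‖ = ‖((eq.symm u : D) : H)‖ := rfl
      _ ≤ ‖e (eq.symm u)‖ := hbound1 _
      _ = 1 * ‖u‖ := by rw [h1, one_mul]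
  let P : H →L[ℂ] H := P₀.mkContinuous 1 hP₀bound
  have hPapp : ∀ u, P u = ((eq.symm u : D) : H) := fun _ => rfl
  refine ⟨P, ?_, ?_⟩
  · intro u
    refine ⟨(eq.symm u).2, ?_⟩
    have h1 : e (eq.symm u) = u := eq.apply_symm_apply u
    rw [he_apply] at h1
    have hx : (⟨P u, (eq.symm u).2⟩ : D) = eq.symm u := Subtype.ext (hPapp u)
    rw [hx, hPapp, eq_sub_iff_add_eq, add_comm]
    exact h1
  · intro x
    have h1 : eq.symm ((x : H) + s x) = x := by
      apply eq.injective
      rw [eq.apply_symm_apply]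
      exact (he_apply x).symm
    rw [hPapp, h1]

lemma radon_aux_key (D : Submodule ℂ H) (s : D →ₗ[ℂ] H)
    (hclosed : IsClosed {p : H × H | ∃ h : p.1 ∈ D, s ⟨p.1, h⟩ = p.2})
    (hsymm : ∀ x y : D, ⟪s x, (y : H)⟫_ℂ = ⟪(x : H), s y⟫_ℂ)
    (hpos : ∀ x : D, 0 ≤ (⟪(x : H), s x⟫_ℂ).re)
    (hadj : ∀ u w : H, (∀ x : D, ⟪u, s x⟫_ℂ = ⟪w, (x : H)⟫_ℂ) →
      ∃ hu : u ∈ D, s ⟨u, hu⟩ = w) :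
    ∃ P K : H →L[ℂ] H,
      (∀ u, ∃ h : P u ∈ D, s ⟨P u, h⟩ = u - P u) ∧
      (∀ x : D, P ((x : H) + s x) = x) ∧
      IsSelfAdjoint P ∧ spectrum ℝ P ⊆ Set.Icc (0:ℝ) 1 ∧
      K = cfc (fun t : ℝ => t^2 / (2*t^2 - 2*t + 1)) P ∧
      (∀ u, ∃ h : K u ∈ D, ∀ x : D,
        ⟪K u, (x : H)⟫_ℂ + ⟪s ⟨K u, h⟩, s x⟫_ℂ = ⟪u, (x : H)⟫_ℂ) := by
  classical
  obtain ⟨P, hP1, hP2⟩ := radon_aux_resolvent D s hclosed hpos hadj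
  -- abbreviations
  have hmem : ∀ u, P u ∈ D := fun u => (hP1 u).choose
  set pd : H → D := fun u => ⟨P u, hmem u⟩ with hpd
  have hs : ∀ u, s (pd u) = u - P u := fun u => (hP1 u).choose_spec
  have hrecon : ∀ u, (pd u : H) + s (pd u) = u := by
    intro u; rw [hs u]; abel
  -- symmetry of P
  have hPsym : ∀ u v, ⟪P u, v⟫_ℂ = ⟪u, P v⟫_ℂ := by
    intro u v
    have l : ⟪P u, v⟫_ℂ = ⟪P u, P v⟫_ℂ + ⟪s (pd u), ((pd v : D) : H)⟫_ℂ := by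
      calc ⟪P u, v⟫_ℂ = ⟪P u, ((pd v : D) : H) + s (pd v)⟫_ℂ := by rw [hrecon v]
        _ = ⟪P u, ((pd v : D) : H)⟫_ℂ + ⟪P u, s (pd v)⟫_ℂ := inner_add_right _ _ _
        _ = ⟪P u, P v⟫_ℂ + ⟪s (pd u), ((pd v : D) : H)⟫_ℂ := by
            congr 1
            exact (hsymm (pd u) (pd v)).symm
    have r : ⟪u, P v⟫_ℂ = ⟪P u, P v⟫_ℂ + ⟪s (pd u), ((pd v : D) : H)⟫_ℂ := by
      calc ⟪u, P v⟫_ℂ = ⟪((pd u : D) : H) + s (pd u), P v⟫_ℂ := by rw [hrecon u]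
        _ = ⟪((pd u : D) : H), P v⟫_ℂ + ⟪s (pd u), P v⟫_ℂ := inner_add_left _ _ _
        _ = ⟪P u, P v⟫_ℂ + ⟪s (pd u), ((pd v : D) : H)⟫_ℂ := rfl
    rw [l, r]
  have hPsa : IsSelfAdjoint P :=
    ContinuousLinearMap.isSelfAdjoint_iff_isSymmetric.mpr (fun u v => hPsym u v)
  -- positivity of P and 1 - P
  have hself : ∀ z : H, RCLike.re ⟪z, z⟫_ℂ = ‖z‖ ^ 2 := fun z =>
    inner_self_eq_norm_sq (𝕜 := ℂ) z
  have hP0 : ∀ u, 0 ≤ RCLike.re ⟪P u, u⟫_ℂ := by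
    intro u
    have hdec : ⟪P u, u⟫_ℂ = ⟪P u, P u⟫_ℂ + ⟪((pd u : D) : H), s (pd u)⟫_ℂ := by
      calc ⟪P u, u⟫_ℂ = ⟪P u, ((pd u : D) : H) + s (pd u)⟫_ℂ := by rw [hrecon u]
        _ = ⟪P u, ((pd u : D) : H)⟫_ℂ + ⟪P u, s (pd u)⟫_ℂ := inner_add_right _ _ _
        _ = ⟪P u, P u⟫_ℂ + ⟪((pd u : D) : H), s (pd u)⟫_ℂ := rfl
    rw [hdec, _root_.map_add, hself]
    have h2 := hpos (pd u)
    have : RCLike.re ⟪((pd u : D) : H), s (pd u)⟫_ℂ = (⟪((pd u : D) : H), s (pd u)⟫_ℂ).re := rfl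
    rw [this]
    nlinarith [sq_nonneg ‖P u‖]
  have hP1' : ∀ u, 0 ≤ RCLike.re ⟪(1 - P) u, u⟫_ℂ := by
    intro u
    have h1 : (1 - P) u = s (pd u) := by
      rw [hs u]; simp
    have hdec : ⟪s (pd u), u⟫_ℂ = ⟪s (pd u), ((pd u : D) : H)⟫_ℂ + ⟪s (pd u), s (pd u)⟫_ℂ := by
      calc ⟪s (pd u), u⟫_ℂ = ⟪s (pd u), ((pd u : D) : H) + s (pd u)⟫_ℂ := by rw [hrecon u]
        _ = ⟪s (pd u), ((pd u : D) : H)⟫_ℂ + ⟪s (pd u), s (pd u)⟫_ℂ := inner_add_right _ _ _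
    rw [h1, hdec, _root_.map_add, hself]
    have h3 : RCLike.re ⟪s (pd u), ((pd u : D) : H)⟫_ℂ
        = RCLike.re ⟪((pd u : D) : H), s (pd u)⟫_ℂ := inner_re_symm _ _
    have h2 := hpos (pd u)
    have h4 : RCLike.re ⟪((pd u : D) : H), s (pd u)⟫_ℂ = (⟪((pd u : D) : H), s (pd u)⟫_ℂ).re := rfl
    rw [h3, h4]
    nlinarith [sq_nonneg ‖s (pd u)‖]
  -- spectrum of P is contained in [0, 1]
  have hPnonneg : (0 : H →L[ℂ] H) ≤ P :=
    (ContinuousLinearMap.nonneg_iff_isPositive P).mpr ⟨ContinuousLinearMap.isSelfAdjoint_iff_isSymmetric.mp hPsa, fun u => hP0 u⟩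
  have h1Psa : IsSelfAdjoint ((1 : H →L[ℂ] H) - P) := (IsSelfAdjoint.one _).sub hPsa
  have h1Pnonneg : (0 : H →L[ℂ] H) ≤ 1 - P :=
    (ContinuousLinearMap.nonneg_iff_isPositive _).mpr ⟨ContinuousLinearMap.isSelfAdjoint_iff_isSymmetric.mp h1Psa, fun u => hP1' u⟩
  have hspec : spectrum ℝ P ⊆ Set.Icc (0:ℝ) 1 := by
    intro r hr
    constructor
    · exact (StarOrderedRing.nonneg_iff_spectrum_nonneg (R := ℝ) P hPsa).mp hPnonneg r hr
    · have hmem1 : (1 : ℝ) - r ∈ ({1} : Set ℝ) - spectrum ℝ P :=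
        Set.sub_mem_sub rfl hr
      rw [spectrum.singleton_sub_eq] at hmem1
      have halg : (algebraMap ℝ (H →L[ℂ] H)) 1 = 1 := _root_.map_one _
      rw [halg] at hmem1
      have := (StarOrderedRing.nonneg_iff_spectrum_nonneg (R := ℝ) _ h1Psa).mp
        h1Pnonneg _ hmem1
      linarith
  -- functional calculus
  set n : ℝ → ℝ := fun t => 2*t^2 - 2*t + 1 with hn
  have hn_pos : ∀ t, 0 < n t := by intro t; simp only [hn]; nlinarith [sq_nonneg (2*t - 1)]
  have hn_ne : ∀ t, n t ≠ 0 := fun t => (hn_pos t).ne'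
  have hn_cont : Continuous n := by simp only [hn]; fun_prop
  set ninv : ℝ → ℝ := fun t => (n t)⁻¹ with hninv
  have hninv_cont : Continuous ninv := hn_cont.inv₀ hn_ne
  set φ : ℝ → ℝ := fun t => t^2 / (2*t^2 - 2*t + 1) with hφ
  set M : H →L[ℂ] H := cfc ninv P with hM
  set N : H →L[ℂ] H := cfc n P with hN
  set K : H →L[ℂ] H := cfc φ P with hK
  have hNM : N * M = 1 := by
    rw [hN, hM, ← cfc_mul n ninv P (hn_cont.continuousOn) (hninv_cont.continuousOn)]
    have : cfc (fun x => n x * ninv x) P = cfc (fun _ : ℝ => (1:ℝ)) P := by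
      apply cfc_congr
      intro x _
      exact mul_inv_cancel₀ (hn_ne x)
    rw [this, cfc_const 1 P hPsa, _root_.map_one]
  have hKPM : K = P^2 * M := by
    rw [hK, hM]
    have h1 : φ = fun t => (fun t : ℝ => t^2) t * ninv t := by
      funext t; simp only [hφ, hninv, hn]; rw [div_eq_mul_inv]
    rw [h1, cfc_mul _ _ P (by fun_prop) (hninv_cont.continuousOn), cfc_pow_id P 2 hPsa]
  -- expansion of N
  have hNapp : ∀ v, N v = (2:ℝ) • P (P v) - (2:ℝ) • P v + v := by
    intro v
    have e1 : cfc n P = (2:ℝ) • P^2 - (2:ℝ) • P + 1 := by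
      have hsplit : cfc n P = cfc (fun t : ℝ => 2*t^2 - 2*t) P + cfc (fun _ : ℝ => (1:ℝ)) P := by
        rw [← cfc_add P (fun t : ℝ => 2*t^2 - 2*t) (fun _ : ℝ => (1:ℝ)) (by fun_prop) (by fun_prop)]
      have hsub : cfc (fun t : ℝ => 2*t^2 - 2*t) P
          = cfc (fun t : ℝ => 2*t^2) P - cfc (fun t : ℝ => 2*t) P := by
        rw [← cfc_sub (fun t : ℝ => 2*t^2) (fun t : ℝ => 2*t) P (by fun_prop) (by fun_prop)]
      have hc1 : cfc (fun t : ℝ => 2*t^2) P = (2:ℝ) • P^2 := by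
        rw [cfc_const_mul 2 (fun t : ℝ => t^2) P (by fun_prop), cfc_pow_id P 2 hPsa]
      have hc2 : cfc (fun t : ℝ => 2*t) P = (2:ℝ) • P := by
        rw [cfc_const_mul 2 (fun t : ℝ => t) P (by fun_prop), cfc_id' ℝ P hPsa]
      rw [hsplit, hsub, hc1, hc2, cfc_const 1 P hPsa, _root_.map_one]
    rw [hN, e1]
    simp only [ContinuousLinearMap.add_apply, ContinuousLinearMap.sub_apply,
      ContinuousLinearMap.smul_apply, ContinuousLinearMap.one_apply, pow_two,
      ContinuousLinearMap.mul_apply]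
  -- the Riesz property of K
  refine ⟨P, K, hP1, hP2, hPsa, hspec, rfl, ?_⟩
  intro u
  have hKapp : K u = P (P (M u)) := by
    rw [hKPM]
    simp only [ContinuousLinearMap.mul_apply, pow_two]
  have hKmem : K u ∈ D := by rw [hKapp]; exact hmem (P (M u))
  refine ⟨hKmem, ?_⟩
  intro x
  set m : H := M u with hm
  have hsK : (⟨K u, hKmem⟩ : D) = pd (P m) := Subtype.ext hKapp
  have hw : (pd (m - P m) : H) = P m - P (P m) := by
    show P (m - P m) = _
    rw [_root_.map_sub]
  have hsPm : s (pd (P m)) = P m - P (P m) := hs (P m)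
  have hsw : s (pd (m - P m)) = (m - P m) - (P m - P (P m)) := by
    rw [hs (m - P m), _root_.map_sub]
  have step1 : ⟪s (⟨K u, hKmem⟩ : D), s x⟫_ℂ = ⟪s (pd (m - P m)), (x : H)⟫_ℂ := by
    rw [hsK]
    have : s (pd (P m)) = ((pd (m - P m) : D) : H) := by rw [hsPm, hw]
    rw [this]
    exact (hsymm (pd (m - P m)) x).symm
  rw [step1, hsw, hKapp, ← inner_add_left]
  congr 1
  have hNu : N m = u := by
    have : N (M u) = (N * M) u := rfl
    rw [hm, this, hNM]; rfl
  rw [← hNu, hNapp m]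
  have h2 : (2:ℝ) • P (P m) = P (P m) + P (P m) := two_smul ℝ _
  have h3 : (2:ℝ) • P m = P m + P m := two_smul ℝ _
  rw [h2, h3]
  abel

/-- Uniqueness: two positive self-adjoint operators with the same domain and the same
"quadratic form of the square" agree. -/
lemma radon_aux_unique (D : Submodule ℂ H) (s t : D →ₗ[ℂ] H)
    (hclosed : IsClosed {p : H × H | ∃ h : p.1 ∈ D, s ⟨p.1, h⟩ = p.2})
    (hsymm : ∀ x y : D, ⟪s x, (y : H)⟫_ℂ = ⟪(x : H), s y⟫_ℂ)
    (hpos : ∀ x : D, 0 ≤ (⟪(x : H), s x⟫_ℂ).re)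
    (hadj : ∀ u w : H, (∀ x : D, ⟪u, s x⟫_ℂ = ⟪w, (x : H)⟫_ℂ) →
      ∃ hu : u ∈ D, s ⟨u, hu⟩ = w)
    (hclosed' : IsClosed {p : H × H | ∃ h : p.1 ∈ D, t ⟨p.1, h⟩ = p.2})
    (hsymm' : ∀ x y : D, ⟪t x, (y : H)⟫_ℂ = ⟪(x : H), t y⟫_ℂ)
    (hpos' : ∀ x : D, 0 ≤ (⟪(x : H), t x⟫_ℂ).re)
    (hadj' : ∀ u w : H, (∀ x : D, ⟪u, t x⟫_ℂ = ⟪w, (x : H)⟫_ℂ) →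
      ∃ hu : u ∈ D, t ⟨u, hu⟩ = w)
    (hinner : ∀ x y : D, ⟪s x, s y⟫_ℂ = ⟪t x, t y⟫_ℂ) : s = t := by
  classical
  obtain ⟨P, K, hP1, hP2, hPsa, hspec, hKdef, hKr⟩ := radon_aux_key D s hclosed hsymm hpos hadj
  obtain ⟨P', K', hP1', hP2', hPsa', hspec', hKdef', hKr'⟩ :=
    radon_aux_key D t hclosed' hsymm' hpos' hadj'
  -- Step 1: K = K'
  have hKK : K = K' := by
    ext u
    obtain ⟨h1, r1⟩ := hKr u
    obtain ⟨h2, r2⟩ := hKr' u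
    set a : D := ⟨K u, h1⟩ with ha
    set b : D := ⟨K' u, h2⟩ with hb
    have r2' : ∀ x : D, ⟪(b : H), (x : H)⟫_ℂ + ⟪s b, s x⟫_ℂ = ⟪u, (x : H)⟫_ℂ := by
      intro x; rw [hinner b x]; exact r2 x
    have key : ∀ x : D, ⟪(a : H) - (b : H), (x : H)⟫_ℂ + ⟪s a - s b, s x⟫_ℂ = 0 := by
      intro x
      rw [inner_sub_left, inner_sub_left]
      linear_combination r1 x - r2' x
    have h0 := key (a - b)
    have hcoe : ((a - b : D) : H) = (a : H) - (b : H) := rfl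
    have hsab : s (a - b) = s a - s b := _root_.map_sub s a b
    rw [hcoe, hsab] at h0
    have hre : ‖(a : H) - (b : H)‖^2 + ‖s a - s b‖^2 = 0 := by
      have hc := congrArg Complex.re h0
      rw [Complex.add_re] at hc
      have e1 : (⟪(a : H) - (b : H), (a : H) - (b : H)⟫_ℂ).re = ‖(a : H) - (b : H)‖^2 :=
        inner_self_eq_norm_sq (𝕜 := ℂ) _
      have e2 : (⟪s a - s b, s a - s b⟫_ℂ).re = ‖s a - s b‖^2 :=
        inner_self_eq_norm_sq (𝕜 := ℂ) _
      rw [e1, e2] at hc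
      simpa using hc
    have : ‖(a : H) - (b : H)‖ = 0 := by nlinarith [norm_nonneg ((a:H) - (b:H)), norm_nonneg (s a - s b), sq_nonneg ‖s a - s b‖]
    have : (a : H) = (b : H) := by rwa [← sub_eq_zero, ← norm_eq_zero]
    exact this
  -- Step 2: P = P' via functional calculus
  set φ : ℝ → ℝ := fun r => r^2 / (2*r^2 - 2*r + 1) with hφ
  have hd_pos : ∀ r : ℝ, 0 < 2*r^2 - 2*r + 1 := by
    intro r; nlinarith [sq_nonneg (2*r - 1)]
  have hφ_cont : Continuous φ := by
    apply Continuous.div (by fun_prop) (by fun_prop)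
    exact fun r => (hd_pos r).ne'
  set pr : ℝ → ℝ := fun r => max 0 (min r 1) with hpr
  have hpr_cont : Continuous pr := by fun_prop
  have hpr_mem : ∀ r, pr r ∈ Set.Icc (0:ℝ) 1 := by
    intro r
    constructor
    · exact le_max_left _ _
    · simp only [hpr, max_le_iff]
      exact ⟨zero_le_one, min_le_right _ _⟩
  set ψ : ℝ → ℝ := fun r => Real.sqrt (pr r) / (Real.sqrt (pr r) + Real.sqrt (1 - pr r)) with hψ
  have hden : ∀ r, 0 < Real.sqrt (pr r) + Real.sqrt (1 - pr r) := by
    intro r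
    obtain ⟨h0, h1⟩ := hpr_mem r
    rcases le_or_gt (pr r) (1/2 : ℝ) with h | h
    · have : 0 < Real.sqrt (1 - pr r) := Real.sqrt_pos.mpr (by linarith)
      have := Real.sqrt_nonneg (pr r)
      linarith
    · have : 0 < Real.sqrt (pr r) := Real.sqrt_pos.mpr (by linarith)
      have := Real.sqrt_nonneg (1 - pr r)
      linarith
  have hψ_cont : Continuous ψ := by
    apply Continuous.div
    · exact (Real.continuous_sqrt.comp hpr_cont)
    · exact (Real.continuous_sqrt.comp hpr_cont).add
        (Real.continuous_sqrt.comp (continuous_const.sub hpr_cont))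
    · exact fun r => (hden r).ne'
  have hcomp : ∀ r ∈ Set.Icc (0:ℝ) 1, ψ (φ r) = r := by
    rintro r ⟨hr0, hr1⟩
    have hd := hd_pos r
    have hφ_mem : φ r ∈ Set.Icc (0:ℝ) 1 := by
      constructor
      · exact div_nonneg (sq_nonneg r) hd.le
      · rw [div_le_one hd]; nlinarith [sq_nonneg (1 - r)]
    have hprφ : pr (φ r) = φ r := by
      simp only [hpr]
      rw [min_eq_left hφ_mem.2, max_eq_right hφ_mem.1]
    have h1φ : 1 - φ r = (1 - r)^2 / (2*r^2 - 2*r + 1) := by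
      show 1 - r^2 / (2*r^2 - 2*r + 1) = _
      rw [eq_div_iff hd.ne', sub_mul, div_mul_cancel₀ _ hd.ne']
      ring
    have hsq1 : Real.sqrt (φ r) = r / Real.sqrt (2*r^2 - 2*r + 1) := by
      rw [hφ]
      show Real.sqrt (r^2 / (2*r^2 - 2*r + 1)) = _
      rw [Real.sqrt_div (sq_nonneg r), Real.sqrt_sq hr0]
    have hsq2 : Real.sqrt (1 - φ r) = (1 - r) / Real.sqrt (2*r^2 - 2*r + 1) := by
      rw [h1φ, Real.sqrt_div (sq_nonneg (1-r)), Real.sqrt_sq (by linarith)]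
    have hsd : 0 < Real.sqrt (2*r^2 - 2*r + 1) := Real.sqrt_pos.mpr hd
    rw [hψ]
    show Real.sqrt (pr (φ r)) / (Real.sqrt (pr (φ r)) + Real.sqrt (1 - pr (φ r))) = r
    rw [hprφ, hsq1, hsq2]
    rw [← add_div]
    have hsum : r + (1 - r) = 1 := by ring
    rw [hsum]
    field_simp
    exact mul_div_cancel_right₀ r (Real.sqrt_pos.mpr (by nlinarith)).ne'
  have hPP : P = P' := by
    have e1 : cfc (ψ ∘ φ) P = cfc ψ (cfc φ P) :=
      cfc_comp ψ φ P hPsa (hψ_cont.continuousOn) (hφ_cont.continuousOn)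
    have e2 : cfc (ψ ∘ φ) P = P := by
      have : cfc (ψ ∘ φ) P = cfc (id : ℝ → ℝ) P := by
        apply cfc_congr
        intro r hr
        exact hcomp r (hspec hr)
      rw [this, cfc_id ℝ P hPsa]
    have e1' : cfc (ψ ∘ φ) P' = cfc ψ (cfc φ P') :=
      cfc_comp ψ φ P' hPsa' (hψ_cont.continuousOn) (hφ_cont.continuousOn)
    have e2' : cfc (ψ ∘ φ) P' = P' := by
      have : cfc (ψ ∘ φ) P' = cfc (id : ℝ → ℝ) P' := by
        apply cfc_congr
        intro r hr
        exact hcomp r (hspec' hr)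
      rw [this, cfc_id ℝ P' hPsa']
    calc P = cfc ψ (cfc φ P) := by rw [← e1, e2]
      _ = cfc ψ K := by rw [← hKdef]
      _ = cfc ψ K' := by rw [hKK]
      _ = cfc ψ (cfc φ P') := by rw [hKdef']
      _ = P' := by rw [← e1', e2']
  -- Step 3: s = t
  ext x
  have hPu : P ((x : H) + s x) = (x : H) := hP2 x
  have hPu' : P' ((x : H) + s x) = (x : H) := by rw [← hPP]; exact hPu
  obtain ⟨hm, hval⟩ := hP1' ((x : H) + s x)
  have hx : (⟨P' ((x : H) + s x), hm⟩ : D) = x := Subtype.ext hPu'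
  rw [hx] at hval
  rw [hval, hPu']
  abel

end RadonAux

set_option maxHeartbeats 1000000 in
/-- Unitarization theorem (abstract form): let `π` be an irreducible unitary representation of
`G` on `H` and `T = R̄` a nonzero closed densely defined operator from `H` into `L²(Ξ)` with
π-invariant domain, satisfying `T π(g) = χ(g)⁻¹ π̂(g) T` for a positive character `χ`, where
`π̂` is a unitary representation on `L²(Ξ)`. If `T = Q ∘ S` is the polar decomposition
(`S = |T|` positive self-adjoint, `Q` a partial isometry vanishing on `(Im S)ᗮ`), then `Q` is
an isometry of `H` into `L²(Ξ)` with `π̂(g) Q π(g)⁻¹ = Q` for all `g`; moreover, if `π̂` is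
irreducible, then `Q` is unitary (surjective) and `π`, `π̂` are unitarily equivalent. -/
theorem radon_unitarization
    {G : Type*} [Group G]
    {H : Type*} [NormedAddCommGroup H] [InnerProductSpace ℂ H] [CompleteSpace H]
    {Ξ : Type*} [MeasurableSpace Ξ] (μΞ : Measure Ξ)
    (π : G →* (H ≃ₗᵢ[ℂ] H)) (πh : G →* (Lp ℂ 2 μΞ ≃ₗᵢ[ℂ] Lp ℂ 2 μΞ))
    (hirr : ∀ V : Submodule ℂ H, IsClosed (V : Set H) →
      (∀ g : G, ∀ x ∈ V, π g x ∈ V) → V = ⊥ ∨ V = ⊤)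
    (χ : G → ℝ) (hχpos : ∀ g, 0 < χ g) (hχmul : ∀ g₁ g₂, χ (g₁ * g₂) = χ g₁ * χ g₂)
    (T : H →ₗ.[ℂ] Lp ℂ 2 μΞ) (hTdense : Dense (T.domain : Set H)) (hTclosed : T.IsClosed)
    (hTne : ∃ x : T.domain, T x ≠ 0)
    (hTsemi : ∀ g : G, ∀ x : T.domain, ∃ hx' : π g x ∈ T.domain,
      T ⟨π g x, hx'⟩ = ((χ g : ℂ))⁻¹ • πh g (T x))
    -- the polar decomposition `T = Q S`
    (S : H →ₗ.[ℂ] H) (Q : H →L[ℂ] Lp ℂ 2 μΞ) (hdom : S.domain = T.domain)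
    (hSpos : ∀ x : S.domain, 0 ≤ (⟪(x : H), S x⟫_ℂ).re)
    (hSsa : IsSelfAdjoint S)
    (hfact : ∀ x : S.domain, T ⟨(x : H), hdom ▸ x.2⟩ = Q (S x))
    (hQker : ∀ x : H, Q x = 0 ↔ ∀ y : S.domain, ⟪x, S y⟫_ℂ = 0)
    (hQpart : ∀ x ∈ (LinearMap.ker (Q : H →ₗ[ℂ] Lp ℂ 2 μΞ))ᗮ, ‖Q x‖ = ‖x‖) :
    (∀ x : H, ‖Q x‖ = ‖x‖) ∧
    (∀ g : G, ∀ x : H, πh g (Q x) = Q (π g x)) ∧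
    ((∀ W : Submodule ℂ (Lp ℂ 2 μΞ), IsClosed (W : Set (Lp ℂ 2 μΞ)) →
        (∀ g : G, ∀ F ∈ W, πh g F ∈ W) → W = ⊥ ∨ W = ⊤) →
      Function.Surjective Q ∧
        ∃ U : H ≃ₗᵢ[ℂ] Lp ℂ 2 μΞ, ∀ g : G, ∀ x : H, U (π g x) = πh g (U x)) := by
  classical
  -- basic facts about π
  have hππ : ∀ (a b : G) (v : H), π a (π b v) = π (a * b) v := by
    intro a b v; rw [map_mul]; rfl
  have hπinv : ∀ (g : G) (v : H), π g⁻¹ (π g v) = v := by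
    intro g v; rw [hππ, inv_mul_cancel, map_one]; rfl
  have hπinv' : ∀ (g : G) (v : H), π g (π g⁻¹ v) = v := by
    intro g v; rw [hππ, mul_inv_cancel, map_one]; rfl
  -- density of the domain
  have hdense : Dense (S.domain : Set H) := by rw [hdom]; exact hTdense
  have hST : ∀ {v : H}, v ∈ S.domain → v ∈ T.domain := by
    intro v hv; rw [← hdom]; exact hv
  have hTS : ∀ {v : H}, v ∈ T.domain → v ∈ S.domain := by
    intro v hv; rw [hdom]; exact hv
  have hsa : S† = S := LinearPMap.isSelfAdjoint_def.mp hSsa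
  have hle1 : S† ≤ S := le_of_eq hsa
  have hle2 : S ≤ S† := le_of_eq hsa.symm
  have hFA : (S†).IsFormalAdjoint S := LinearPMap.adjoint_isFormalAdjoint hdense
  -- symmetry of S
  have hsymm : ∀ x y : S.domain, ⟪S x, (y : H)⟫_ℂ = ⟪(x : H), S y⟫_ℂ := by
    intro x y
    have hxmem : (x : H) ∈ (S†).domain := hle2.1 x.2
    have hx : (S†) ⟨(x : H), hxmem⟩ = S x := hle1.2 rfl
    calc ⟪S x, (y : H)⟫_ℂ = ⟪(S†) ⟨(x : H), hxmem⟩, (y : H)⟫_ℂ := by rw [hx]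
      _ = ⟪(x : H), S y⟫_ℂ := hFA ⟨(x : H), hxmem⟩ y
  -- maximality ("adjoint") property of S
  have hadj : ∀ u w : H, (∀ x : S.domain, ⟪u, S x⟫_ℂ = ⟪w, (x : H)⟫_ℂ) →
      ∃ hu : u ∈ S.domain, S ⟨u, hu⟩ = w := by
    intro u w h
    have hmem : u ∈ (S†).domain :=
      LinearPMap.mem_adjoint_domain_of_exists u ⟨w, fun x => (h x).symm⟩
    have happ : (S†) ⟨u, hmem⟩ = w :=
      LinearPMap.adjoint_apply_eq hdense ⟨u, hmem⟩ (fun x => (h x).symm)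
    have humem : u ∈ S.domain := hle1.1 hmem
    exact ⟨humem, by rw [← happ]; exact (hle1.2 rfl).symm⟩
  -- invariance of the domain
  have hDinv : ∀ (g : G) (x : S.domain), (π g (x : H)) ∈ S.domain := by
    intro g x
    obtain ⟨h', _⟩ := hTsemi g ⟨(x : H), hST x.2⟩
    exact hTS h'
  -- kernel of Q is π-invariant, hence ⊥
  have hSperp : ∀ (z : H), Q z = 0 → ∀ (y : S.domain), ⟪z, S y⟫_ℂ = 0 :=
    fun z hz => (hQker z).mp hz
  have hKinv : ∀ g, ∀ z ∈ LinearMap.ker (Q : H →ₗ[ℂ] Lp ℂ 2 μΞ), π g z ∈ LinearMap.ker (Q : H →ₗ[ℂ] Lp ℂ 2 μΞ) := by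
    intro g z hz
    have hz0 : Q z = 0 := LinearMap.mem_ker.mp hz
    obtain ⟨hzD, hSz⟩ := hadj z 0 (fun x => by
      rw [hSperp z hz0 x, inner_zero_left])
    have hTz : T ⟨z, hST hzD⟩ = 0 := by
      rw [hfact ⟨z, hzD⟩, hSz, _root_.map_zero]
    obtain ⟨hx', hTg⟩ := hTsemi g ⟨z, hST hzD⟩
    have hTg0 : T ⟨π g z, hx'⟩ = 0 := by rw [hTg, hTz, _root_.map_zero, smul_zero]
    have hgD : π g z ∈ S.domain := hTS hx'
    have hQS : Q (S ⟨π g z, hgD⟩) = 0 := by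
      rw [← hfact ⟨π g z, hgD⟩]; exact hTg0
    have hperp : S ⟨π g z, hgD⟩ ∈ (LinearMap.ker (Q : H →ₗ[ℂ] Lp ℂ 2 μΞ))ᗮ := by
      rw [Submodule.mem_orthogonal]
      intro u hu
      exact hSperp u (LinearMap.mem_ker.mp hu) ⟨π g z, hgD⟩
    have hn := hQpart _ hperp
    rw [hQS, norm_zero] at hn
    have hS0 : S ⟨π g z, hgD⟩ = 0 := norm_eq_zero.mp hn.symm
    apply LinearMap.mem_ker.mpr
    show Q (π g z) = 0
    rw [hQker]
    intro y
    calc ⟪π g z, S y⟫_ℂ = ⟪S ⟨π g z, hgD⟩, (y : H)⟫_ℂ := (hsymm ⟨π g z, hgD⟩ y).symm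
      _ = 0 := by rw [hS0, inner_zero_left]
  have hKbot : LinearMap.ker (Q : H →ₗ[ℂ] Lp ℂ 2 μΞ) = ⊥ := by
    rcases hirr (LinearMap.ker (Q : H →ₗ[ℂ] Lp ℂ 2 μΞ)) (ContinuousLinearMap.isClosed_ker Q) hKinv with h | h
    · exact h
    · exfalso
      obtain ⟨x0, hx0⟩ := hTne
      apply hx0
      have hx0D : (x0 : H) ∈ S.domain := hTS x0.2
      have h1 : T ⟨(x0 : H), hST hx0D⟩ = Q (S ⟨(x0 : H), hx0D⟩) := hfact ⟨(x0 : H), hx0D⟩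
      have h2 : Q (S ⟨(x0 : H), hx0D⟩) = 0 := by
        have : S ⟨(x0 : H), hx0D⟩ ∈ LinearMap.ker (Q : H →ₗ[ℂ] Lp ℂ 2 μΞ) := by rw [h]; trivial
        exact LinearMap.mem_ker.mp this
      have h3 : T x0 = T ⟨(x0 : H), hST hx0D⟩ := by
        congr 1
      rw [h3, h1, h2]
  -- Part 1 : Q is an isometry
  have step1 : ∀ x : H, ‖Q x‖ = ‖x‖ := by
    intro x
    apply hQpart
    rw [hKbot, Submodule.bot_orthogonal_eq_top]
    trivial
  have Qinj : Function.Injective Q := by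
    intro a b hab
    have h := step1 (a - b)
    rw [_root_.map_sub, hab, sub_self, norm_zero] at h
    exact sub_eq_zero.mp (norm_eq_zero.mp h.symm)
  -- closedness of the graph of S
  have hclosedS : IsClosed {p : H × H | ∃ h : p.1 ∈ S.domain, S ⟨p.1, h⟩ = p.2} := by
    have hset : {p : H × H | ∃ h : p.1 ∈ S.domain, S ⟨p.1, h⟩ = p.2}
        = (fun p : H × H => (p.1, Q p.2)) ⁻¹' (T.graph : Set (H × Lp ℂ 2 μΞ)) := by
      ext p
      simp only [Set.mem_setOf_eq, Set.mem_preimage, SetLike.mem_coe, LinearPMap.mem_graph_iff]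
      constructor
      · rintro ⟨h, hs⟩
        refine ⟨⟨p.1, hST h⟩, rfl, ?_⟩
        rw [hfact ⟨p.1, h⟩, hs]
      · rintro ⟨y, hy1, hy2⟩
        have h1 : p.1 ∈ S.domain := by rw [hdom, ← hy1]; exact y.2
        refine ⟨h1, Qinj ?_⟩
        rw [← hfact ⟨p.1, h1⟩]
        have hyy : y = ⟨p.1, hST h1⟩ := Subtype.ext hy1
        rw [← hyy]
        exact hy2
    rw [hset]
    exact hTclosed.preimage (continuous_fst.prodMk (Q.continuous.comp continuous_snd))
  -- density of the range of S
  have hrange_dense : Dense ((LinearMap.range S.toFun : Submodule ℂ H) : Set H) := by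
    rw [Submodule.dense_iff_topologicalClosure_eq_top,
      Submodule.topologicalClosure_eq_top_iff, Submodule.eq_bot_iff]
    intro z hz
    have hz' : Q z = 0 := by
      rw [hQker]
      intro y
      have h1 := (Submodule.mem_orthogonal _ z).mp hz (S y) (LinearMap.mem_range_self _ y)
      rw [← inner_conj_symm, h1, _root_.map_zero]
    have : z ∈ LinearMap.ker (Q : H →ₗ[ℂ] Lp ℂ 2 μΞ) := LinearMap.mem_ker.mpr hz'
    rwa [hKbot, Submodule.mem_bot] at this
  -- Commutation relation for S
  have hcomm : ∀ (g : G) (x : S.domain),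
      S ⟨π g (x : H), hDinv g x⟩ = ((χ g : ℂ))⁻¹ • π g (S x) := by
    intro g x₀
    set c : ℝ := χ g with hc
    have hc0 : (c : ℂ) ≠ 0 := by
      simp only [ne_eq, Complex.ofReal_eq_zero]
      exact (hχpos g).ne'
    -- construct t
    set πL : H →ₗ[ℂ] H := (π g).toLinearEquiv.toLinearMap with hπL
    set πLi : H →ₗ[ℂ] H := (π g⁻¹).toLinearEquiv.toLinearMap with hπLi
    have hπL_apply : ∀ v, πL v = π g v := fun _ => rfl
    have hπLi_apply : ∀ v, πLi v = π g⁻¹ v := fun _ => rfl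
    set mapD : S.domain →ₗ[ℂ] S.domain :=
      LinearMap.codRestrict S.domain (πL.comp S.domain.subtype)
        (fun x => hDinv g x) with hmapD
    have hmapD_apply : ∀ x : S.domain, (mapD x : H) = π g (x : H) := fun _ => rfl
    set t : S.domain →ₗ[ℂ] H := (c : ℂ) • (πLi.comp (S.toFun.comp mapD)) with ht
    have ht_apply : ∀ x : S.domain, t x = (c : ℂ) • π g⁻¹ (S (mapD x)) := fun _ => rfl
    have hmapD_eq : ∀ x : S.domain, mapD x = ⟨π g (x : H), hDinv g x⟩ :=
      fun x => Subtype.ext rfl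
    -- the norm identity
    have hnormc : ‖((c : ℝ) : ℂ)‖ = c := by
      rw [Complex.norm_real, Real.norm_eq_abs, abs_of_pos (hχpos g)]
    have hnormT : ∀ y : S.domain, ‖S y‖ = ‖Q (S y)‖ := fun y => (step1 _).symm
    have hnorm : ∀ x : S.domain, ‖t x‖ = ‖S x‖ := by
      intro x
      obtain ⟨hx', hT⟩ := hTsemi g ⟨(x : H), hST x.2⟩
      have e0 : Q (S (mapD x)) = T ⟨π g (x : H), hx'⟩ := by
        rw [← hfact (mapD x)]
        rfl
      have e1 : ‖S (mapD x)‖ = c⁻¹ * ‖S x‖ := by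
        rw [hnormT (mapD x), e0, hT, norm_smul, (πh g).norm_map, norm_inv, hnormc,
          hfact x, ← hnormT x]
      have e2 : ‖t x‖ = c * ‖S (mapD x)‖ := by
        rw [ht_apply, norm_smul, (π g⁻¹).norm_map, hnormc]
      rw [e2, e1, ← mul_assoc, mul_inv_cancel₀ (hχpos g).ne', one_mul]
    -- data for t
    have hsymm_t : ∀ x y : S.domain, ⟪t x, (y : H)⟫_ℂ = ⟪(x : H), t y⟫_ℂ := by
      intro x y
      rw [ht_apply, ht_apply, inner_smul_left, inner_smul_right]
      congr 1
      · rw [Complex.conj_ofReal]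
      calc ⟪π g⁻¹ (S (mapD x)), (y : H)⟫_ℂ
          = ⟪π g (π g⁻¹ (S (mapD x))), π g (y : H)⟫_ℂ := ((π g).inner_map_map _ _).symm
        _ = ⟪S (mapD x), ((mapD y : S.domain) : H)⟫_ℂ := by rw [hπinv']; rfl
        _ = ⟪((mapD x : S.domain) : H), S (mapD y)⟫_ℂ := hsymm (mapD x) (mapD y)
        _ = ⟪π g (x : H), π g (π g⁻¹ (S (mapD y)))⟫_ℂ := by rw [hπinv']; rfl
        _ = ⟪(x : H), π g⁻¹ (S (mapD y))⟫_ℂ := (π g).inner_map_map _ _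
    have hpos_t : ∀ x : S.domain, 0 ≤ (⟪(x : H), t x⟫_ℂ).re := by
      intro x
      rw [ht_apply, inner_smul_right]
      have h1 : ⟪(x : H), π g⁻¹ (S (mapD x))⟫_ℂ
          = ⟪((mapD x : S.domain) : H), S (mapD x)⟫_ℂ := by
        calc ⟪(x : H), π g⁻¹ (S (mapD x))⟫_ℂ
            = ⟪π g (x : H), π g (π g⁻¹ (S (mapD x)))⟫_ℂ := ((π g).inner_map_map _ _).symm
          _ = ⟪((mapD x : S.domain) : H), S (mapD x)⟫_ℂ := by rw [hπinv']; rfl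
      rw [h1]
      have h2 := hSpos (mapD x)
      have h3 : (((c : ℝ) : ℂ) * ⟪((mapD x : S.domain) : H), S (mapD x)⟫_ℂ).re
          = c * (⟪((mapD x : S.domain) : H), S (mapD x)⟫_ℂ).re := by
        simp [Complex.mul_re]
      rw [h3]
      exact mul_nonneg (hχpos g).le h2
    have hadj_t : ∀ u w : H, (∀ x : S.domain, ⟪u, t x⟫_ℂ = ⟪w, (x : H)⟫_ℂ) →
        ∃ hu : u ∈ S.domain, t ⟨u, hu⟩ = w := by
      intro u w h
      have key : ∀ y : S.domain, ⟪π g u, S y⟫_ℂ = ⟪(c : ℂ)⁻¹ • π g w, (y : H)⟫_ℂ := by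
        intro y
        -- use x := the pullback of y
        set x : S.domain := ⟨π g⁻¹ (y : H), by
          have := hDinv g⁻¹ y; exact this⟩ with hx
        have hmx : mapD x = y := Subtype.ext (by
          show π g (π g⁻¹ (y : H)) = (y : H)
          exact hπinv' g _)
        have h1 := h x
        rw [ht_apply, hmx, inner_smul_right] at h1
        -- h1 : ↑c * ⟪u, π g⁻¹ (S y)⟫ = ⟪w, ↑x⟫
        have h2 : ⟪u, π g⁻¹ (S y)⟫_ℂ = ⟪π g u, S y⟫_ℂ := by
          calc ⟪u, π g⁻¹ (S y)⟫_ℂ = ⟪π g u, π g (π g⁻¹ (S y))⟫_ℂ :=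
                ((π g).inner_map_map _ _).symm
            _ = ⟪π g u, S y⟫_ℂ := by rw [hπinv']
        have h3 : ⟪w, (x : H)⟫_ℂ = ⟪π g w, (y : H)⟫_ℂ := by
          calc ⟪w, (x : H)⟫_ℂ = ⟪π g w, π g (x : H)⟫_ℂ := ((π g).inner_map_map _ _).symm
            _ = ⟪π g w, (y : H)⟫_ℂ := by
                congr 1
                show π g (π g⁻¹ (y : H)) = (y : H)
                exact hπinv' g _
        rw [h2, h3] at h1
        rw [inner_smul_left]
        rw [← h1]
        rw [map_inv₀, Complex.conj_ofReal]
        rw [← mul_assoc, inv_mul_cancel₀ hc0, one_mul]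
      obtain ⟨hgu, hgval⟩ := hadj (π g u) ((c : ℂ)⁻¹ • π g w) key
      have huD : u ∈ S.domain := by
        have h5 := hDinv g⁻¹ ⟨π g u, hgu⟩
        simpa [hπinv g u] using h5
      refine ⟨huD, ?_⟩
      have hmu : mapD ⟨u, huD⟩ = ⟨π g u, hgu⟩ := Subtype.ext rfl
      rw [ht_apply, hmu, hgval, _root_.map_smul, hπinv, smul_smul,
        mul_inv_cancel₀ hc0, one_smul]
    have hclosed_t : IsClosed {p : H × H | ∃ h : p.1 ∈ S.domain, t ⟨p.1, h⟩ = p.2} := by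
      have hset : {p : H × H | ∃ h : p.1 ∈ S.domain, t ⟨p.1, h⟩ = p.2}
          = (fun p : H × H => (π g p.1, (c : ℂ)⁻¹ • π g p.2)) ⁻¹'
            {p : H × H | ∃ h : p.1 ∈ S.domain, S ⟨p.1, h⟩ = p.2} := by
        ext p
        simp only [Set.mem_setOf_eq, Set.mem_preimage]
        constructor
        · rintro ⟨h, hv⟩
          refine ⟨hDinv g ⟨p.1, h⟩, ?_⟩
          have hmp : mapD ⟨p.1, h⟩ = ⟨π g p.1, hDinv g ⟨p.1, h⟩⟩ := Subtype.ext rfl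
          rw [← hv, ht_apply, hmp, _root_.map_smul, hπinv', smul_smul,
            inv_mul_cancel₀ hc0, one_smul]
        · rintro ⟨h, hv⟩
          have hp1 : p.1 ∈ S.domain := by
            have h5 := hDinv g⁻¹ ⟨π g p.1, h⟩
            simpa [hπinv g p.1] using h5
          refine ⟨hp1, ?_⟩
          have hmp : mapD ⟨p.1, hp1⟩ = ⟨π g p.1, h⟩ := Subtype.ext rfl
          rw [ht_apply, hmp, hv, _root_.map_smul, hπinv, smul_smul,
            mul_inv_cancel₀ hc0, one_smul]
      rw [hset]
      apply hclosedS.preimage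
      exact ((π g).continuous.comp continuous_fst).prodMk
        (((π g).continuous.comp continuous_snd).const_smul _)
    -- inner products agree
    have hinner : ∀ x y : S.domain, ⟪S.toFun x, S.toFun y⟫_ℂ = ⟪t x, t y⟫_ℂ :=
      radon_aux_polar S.toFun t (fun z => (hnorm z).symm)
    have hEQ : S.toFun = t :=
      radon_aux_unique S.domain S.toFun t hclosedS hsymm hSpos hadj
        hclosed_t hsymm_t hpos_t hadj_t hinner
    -- conclude
    have hSx : S x₀ = (c : ℂ) • π g⁻¹ (S (mapD x₀)) := by
      have h6 : S.toFun x₀ = t x₀ := by rw [hEQ]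
      rw [show (S x₀ : H) = S.toFun x₀ from rfl, h6, ht_apply]
    have hmx : mapD x₀ = ⟨π g (x₀ : H), hDinv g x₀⟩ := Subtype.ext rfl
    rw [hmx] at hSx
    rw [eq_comm, inv_smul_eq_iff₀ hc0]
    rw [hSx, _root_.map_smul, hπinv']
  -- Part 2 : intertwining
  have part2 : ∀ (g : G) (x : H), πh g (Q x) = Q (π g x) := by
    intro g
    have hc0 : ((χ g : ℝ) : ℂ) ≠ 0 := by
      simp only [ne_eq, Complex.ofReal_eq_zero]
      exact (hχpos g).ne'
    have hEc : IsClosed {x : H | πh g (Q x) = Q (π g x)} :=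
      isClosed_eq ((πh g).continuous.comp Q.continuous)
        (Q.continuous.comp (π g).continuous)
    have hsub : ((LinearMap.range S.toFun : Submodule ℂ H) : Set H)
        ⊆ {x : H | πh g (Q x) = Q (π g x)} := by
      intro v hv
      rw [SetLike.mem_coe, LinearMap.mem_range] at hv
      obtain ⟨y, rfl⟩ := hv
      have h1 : Q (S y) = T ⟨(y : H), hST y.2⟩ := (hfact y).symm
      obtain ⟨hx', hT⟩ := hTsemi g ⟨(y : H), hST y.2⟩
      have h2 : πh g (T ⟨(y : H), hST y.2⟩) = ((χ g : ℝ) : ℂ) • T ⟨π g (y : H), hx'⟩ := by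
        rw [hT, smul_inv_smul₀ hc0]
      have h3 : T ⟨π g (y : H), hx'⟩ = Q (S ⟨π g (y : H), hTS hx'⟩) := hfact ⟨π g (y : H), hTS hx'⟩
      have h4 : S ⟨π g (y : H), hTS hx'⟩ = ((χ g : ℝ) : ℂ)⁻¹ • π g (S y) := hcomm g y
      show πh g (Q (S y)) = Q (π g (S y))
      rw [h1, h2, h3, h4, _root_.map_smul, smul_smul, mul_inv_cancel₀ hc0, one_smul]
    intro x
    have hx : x ∈ closure ((LinearMap.range S.toFun : Submodule ℂ H) : Set H) :=
      hrange_dense x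
    have : closure ((LinearMap.range S.toFun : Submodule ℂ H) : Set H)
        ⊆ {x : H | πh g (Q x) = Q (π g x)} := hEc.closure_subset_iff.mpr hsub
    exact this hx
  refine ⟨step1, part2, ?_⟩
  -- Part 3 : surjectivity and unitary equivalence
  intro hirr2
  have hQli : ∃ f : H →ₗᵢ[ℂ] Lp ℂ 2 μΞ, ∀ x, f x = Q x := by
    exact ⟨⟨Q.toLinearMap, step1⟩, fun x => rfl⟩
  obtain ⟨f, hf⟩ := hQli
  have hWclosed : IsClosed ((LinearMap.range (Q : H →ₗ[ℂ] Lp ℂ 2 μΞ) : Submodule ℂ (Lp ℂ 2 μΞ)) : Set (Lp ℂ 2 μΞ)) := by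
    have : ((LinearMap.range (Q : H →ₗ[ℂ] Lp ℂ 2 μΞ) : Submodule ℂ (Lp ℂ 2 μΞ)) : Set (Lp ℂ 2 μΞ)) = Set.range f := by
      ext w
      simp only [SetLike.mem_coe, LinearMap.mem_range, Set.mem_range]
      constructor
      · rintro ⟨a, rfl⟩; exact ⟨a, hf a⟩
      · rintro ⟨a, rfl⟩; exact ⟨a, (hf a).symm⟩
    rw [this]
    exact f.isometry.isClosedEmbedding.isClosed_range
  have hWinv : ∀ g : G, ∀ F ∈ (LinearMap.range (Q : H →ₗ[ℂ] Lp ℂ 2 μΞ) : Submodule ℂ (Lp ℂ 2 μΞ)),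
      πh g F ∈ (LinearMap.range (Q : H →ₗ[ℂ] Lp ℂ 2 μΞ) : Submodule ℂ (Lp ℂ 2 μΞ)) := by
    rintro g F ⟨a, rfl⟩
    exact ⟨π g a, (part2 g a).symm⟩
  have hWtop : (LinearMap.range (Q : H →ₗ[ℂ] Lp ℂ 2 μΞ) : Submodule ℂ (Lp ℂ 2 μΞ)) = ⊤ := by
    rcases hirr2 _ hWclosed hWinv with h | h
    · exfalso
      obtain ⟨x0, hx0⟩ := hTne
      apply hx0
      have hx0D : (x0 : H) ∈ S.domain := hTS x0.2
      have h1 : T x0 = Q (S ⟨(x0 : H), hx0D⟩) := by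
        rw [← hfact ⟨(x0 : H), hx0D⟩]
      have h2 : Q (S ⟨(x0 : H), hx0D⟩) ∈ (LinearMap.range (Q : H →ₗ[ℂ] Lp ℂ 2 μΞ) : Submodule ℂ (Lp ℂ 2 μΞ)) :=
        ⟨_, rfl⟩
      rw [h] at h2
      rw [h1]
      simpa using h2
    · exact h
  have hsurj : Function.Surjective Q := by
    intro w
    have : w ∈ (LinearMap.range (Q : H →ₗ[ℂ] Lp ℂ 2 μΞ) : Submodule ℂ (Lp ℂ 2 μΞ)) := by rw [hWtop]; trivial
    exact this
  refine ⟨hsurj, ?_⟩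
  have hfsurj : Function.Surjective f := by
    intro w
    obtain ⟨a, ha⟩ := hsurj w
    exact ⟨a, by rw [hf a, ha]⟩
  refine ⟨LinearIsometryEquiv.ofSurjective f hfsurj, ?_⟩
  intro g x
  have hcoe : ∀ v, (LinearIsometryEquiv.ofSurjective f hfsurj) v = Q v := by
    intro v
    rw [← hf v]
    rfl
  rw [hcoe, hcoe, ← part2 g x]
end
end

section
/- Let R̄, Q, I be as in the unitarization of the Radon transform: Q unitary intertwining π and π̂, I a positive self-adjoint operator semi-invariant with weight χ^{-1} such that Qf = I R̄ f for f ∈ dom R̄, and let ψ be an admissible vector for the square-integrable representation π with Qψ ∈ dom I and Ψ = I Qψ. Then for all f ∈ dom R̄ and g ∈ G: ⟨f, π(g)ψ⟩ = χ(g) ⟨R̄f, π̂(g)Ψ⟩, and consequently ‖f‖² = ∫_G χ(g)² |⟨R̄f, π̂(g)Ψ⟩|² dμ(g) and f = ∫_G χ(g) ⟨R̄f, π̂(g)Ψ⟩ π(g)ψ dμ(g) weakly. -/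
/-!
Intertwining by `Q` and `Qf = I R̄f` turn the voice transform `⟨π(g)ψ, f⟩` into
`⟨π̂(g)Qψ, I R̄f⟩`. Since `I` is symmetric, it can be moved onto `π̂(g)Qψ`, and semi-invariance
gives `I π̂(g) Qψ = χ(g) π̂(g) I Qψ = χ(g) π̂(g)Ψ`. Substituting this identity into the
admissibility (reproducing) formula for `ψ` yields the Plancherel and inversion formulas.
-/

open MeasureTheory LinearPMap
open scoped InnerProductSpace

section

variable {𝕜 E : Type*} [RCLike 𝕜] [NormedAddCommGroup E] [InnerProductSpace 𝕜 E]

theorem IsSelfAdjoint.isFormalAdjoint_self [CompleteSpace E] {A : E →ₗ.[𝕜] E}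
    (hA : IsSelfAdjoint A) : A.IsFormalAdjoint A := by
  simpa only [isSelfAdjoint_def.mp hA] using adjoint_isFormalAdjoint hA.dense_domain

theorem LinearPMap.IsFormalAdjoint.inner_map_apply_eq_mul_inner {A : E →ₗ.[𝕜] E}
    (hA : A.IsFormalAdjoint A) {U : E → E} {c : ℝ} (hc : c ≠ 0) (x y : A.domain)
    (hUx : U x ∈ A.domain) (hsemi : U (A x) = (c : 𝕜)⁻¹ • A ⟨U x, hUx⟩) :
    ⟪U x, A y⟫_𝕜 = c * ⟪U (A x), y⟫_𝕜 := by
  have hAUx : A ⟨U x, hUx⟩ = (c : 𝕜) • U (A x) := by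
    rw [hsemi, smul_smul, mul_inv_cancel₀ (RCLike.ofReal_ne_zero.mpr hc), one_smul]
  calc ⟪U x, A y⟫_𝕜 = ⟪A ⟨U x, hUx⟩, y⟫_𝕜 := (hA ⟨U x, hUx⟩ y).symm
    _ = c * ⟪U (A x), y⟫_𝕜 := by rw [hAUx, inner_smul_left, RCLike.conj_ofReal]

theorem norm_sq_eq_integral_norm_inner_sq {G : Type*} [MeasurableSpace G] {μ : Measure G}
    {v : G → E} {f : E} (hf : ⟪f, f⟫_𝕜 = ∫ g, ⟪v g, f⟫_𝕜 * ⟪f, v g⟫_𝕜 ∂μ) :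
    ‖f‖ ^ 2 = ∫ g, ‖⟪v g, f⟫_𝕜‖ ^ 2 ∂μ := by
  have hsq : ∀ g, ⟪v g, f⟫_𝕜 * ⟪f, v g⟫_𝕜 = ((‖⟪v g, f⟫_𝕜‖ ^ 2 : ℝ) : 𝕜) := fun g => by
    rw [← inner_conj_symm f, RCLike.mul_conj, RCLike.ofReal_pow]
  simp_rw [hsq, integral_ofReal, inner_self_eq_norm_sq_to_K, ← RCLike.ofReal_pow] at hf
  exact_mod_cast hf

end

theorem radon_inversion_formula_general
    {G : Type*} [Group G]
    [MeasurableSpace G] (μ : Measure G)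
    {X Ξ : Type*} [MeasurableSpace X] [MeasurableSpace Ξ] (ν : Measure X) (νΞ : Measure Ξ)
    (π : G →* (Lp ℂ 2 ν ≃ₗᵢ[ℂ] Lp ℂ 2 ν)) (πh : G →* (Lp ℂ 2 νΞ ≃ₗᵢ[ℂ] Lp ℂ 2 νΞ))
    (χ : G → ℝ) (hχpos : ∀ g, 0 < χ g)
    -- the closed Radon transform and the unitarization
    (Rbar : Lp ℂ 2 ν →ₗ.[ℂ] Lp ℂ 2 νΞ)
    (Q : Lp ℂ 2 ν ≃ₗᵢ[ℂ] Lp ℂ 2 νΞ)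
    (hQint : ∀ g : G, ∀ x : Lp ℂ 2 ν, Q (π g x) = πh g (Q x))
    (I : Lp ℂ 2 νΞ →ₗ.[ℂ] Lp ℂ 2 νΞ)
    (hIsa : IsSelfAdjoint I)
    (hIsemi : ∀ g : G, ∀ x : I.domain, ∃ hx' : πh g x ∈ I.domain,
      πh g (I x) = ((χ g : ℂ))⁻¹ • I ⟨πh g x, hx'⟩)
    (hQR : ∀ x : Rbar.domain, ∃ hx : Rbar x ∈ I.domain, Q (x : Lp ℂ 2 ν) = I ⟨Rbar x, hx⟩)
    -- the admissible vector and the analyzing vector Ψ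
    (ψ : Lp ℂ 2 ν)
    (hadm : ∀ f h : Lp ℂ 2 ν,
      ⟪h, f⟫_ℂ = ∫ g : G, ⟪π g ψ, f⟫_ℂ * ⟪h, π g ψ⟫_ℂ ∂μ)
    (hQψ : Q ψ ∈ I.domain) (Ψ : Lp ℂ 2 νΞ) (hΨ : Ψ = I ⟨Q ψ, hQψ⟩) :
    ∀ f : Rbar.domain,
      (∀ g : G, ⟪π g ψ, (f : Lp ℂ 2 ν)⟫_ℂ = (χ g : ℂ) * ⟪πh g Ψ, Rbar f⟫_ℂ) ∧
      ‖(f : Lp ℂ 2 ν)‖ ^ 2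
        = ∫ g : G, (χ g) ^ 2 * ‖(⟪πh g Ψ, Rbar f⟫_ℂ)‖ ^ 2 ∂μ ∧
      (∀ h : Lp ℂ 2 ν,
        ⟪h, (f : Lp ℂ 2 ν)⟫_ℂ
          = ∫ g : G, (χ g : ℂ) * ⟪πh g Ψ, Rbar f⟫_ℂ * ⟪h, π g ψ⟫_ℂ ∂μ) := by
  intro f
  obtain ⟨hfI, hQf⟩ := hQR f
  have hcoeff (g : G) : ⟪π g ψ, (f : Lp ℂ 2 ν)⟫_ℂ = (χ g : ℂ) * ⟪πh g Ψ, Rbar f⟫_ℂ := by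
    obtain ⟨hgQψ, hsemi⟩ := hIsemi g ⟨Q ψ, hQψ⟩
    rw [← Q.inner_map_map, hQint, hQf, hΨ]
    exact hIsa.isFormalAdjoint_self.inner_map_apply_eq_mul_inner (hχpos g).ne' _ _ hgQψ hsemi
  refine ⟨hcoeff, ?_, fun h => ?_⟩
  · rw [norm_sq_eq_integral_norm_inner_sq (hadm f f)]
    simp only [hcoeff, norm_mul, Complex.norm_real, Real.norm_eq_abs, mul_pow, sq_abs]
  · simp only [hadm f h, hcoeff, mul_assoc]

/-- Inversion formula for the Radon transform: with `Q : L²(X) → L²(Ξ)` unitary intertwining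
`π` and `π̂`, `I` a positive self-adjoint operator semi-invariant with weight `χ⁻¹` such that
`Qf = I R̄ f` on `dom R̄`, and `ψ` an admissible vector for the square-integrable irreducible
representation `π` with `Qψ ∈ dom I` and `Ψ = I Qψ`, one has, for all `f ∈ dom R̄` and `g ∈ G`:
`⟨f, π(g)ψ⟩ = χ(g) ⟨R̄f, π̂(g)Ψ⟩`, hence `‖f‖² = ∫_G χ(g)² |⟨R̄f, π̂(g)Ψ⟩|² dμ(g)` and
`f = ∫_G χ(g) ⟨R̄f, π̂(g)Ψ⟩ π(g)ψ dμ(g)` weakly. -/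
theorem radon_inversion_formula
    {G : Type*} [Group G] [TopologicalSpace G] [IsTopologicalGroup G] [LocallyCompactSpace G]
    [MeasurableSpace G] (μ : Measure G)
    (hμleft : ∀ g₀ : G, Measure.map (fun g => g₀ * g) μ = μ)
    {X Ξ : Type*} [MeasurableSpace X] [MeasurableSpace Ξ] (ν : Measure X) (νΞ : Measure Ξ)
    (π : G →* (Lp ℂ 2 ν ≃ₗᵢ[ℂ] Lp ℂ 2 ν)) (πh : G →* (Lp ℂ 2 νΞ ≃ₗᵢ[ℂ] Lp ℂ 2 νΞ))
    (hirr : ∀ V : Submodule ℂ (Lp ℂ 2 ν), IsClosed (V : Set (Lp ℂ 2 ν)) →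
      (∀ g : G, ∀ x ∈ V, π g x ∈ V) → V = ⊥ ∨ V = ⊤)
    (χ : G → ℝ) (hχpos : ∀ g, 0 < χ g) (hχmul : ∀ g₁ g₂, χ (g₁ * g₂) = χ g₁ * χ g₂)
    -- the closed Radon transform and the unitarization
    (Rbar : Lp ℂ 2 ν →ₗ.[ℂ] Lp ℂ 2 νΞ) (hRclosed : Rbar.IsClosed)
    (hRdense : Dense (Rbar.domain : Set (Lp ℂ 2 ν)))
    (Q : Lp ℂ 2 ν ≃ₗᵢ[ℂ] Lp ℂ 2 νΞ)
    (hQint : ∀ g : G, ∀ x : Lp ℂ 2 ν, Q (π g x) = πh g (Q x))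
    (I : Lp ℂ 2 νΞ →ₗ.[ℂ] Lp ℂ 2 νΞ)
    (hIsa : IsSelfAdjoint I)
    (hIpos : ∀ x : I.domain, 0 ≤ (⟪(x : Lp ℂ 2 νΞ), I x⟫_ℂ).re)
    (hIsemi : ∀ g : G, ∀ x : I.domain, ∃ hx' : πh g x ∈ I.domain,
      πh g (I x) = ((χ g : ℂ))⁻¹ • I ⟨πh g x, hx'⟩)
    (hQR : ∀ x : Rbar.domain, ∃ hx : Rbar x ∈ I.domain, Q (x : Lp ℂ 2 ν) = I ⟨Rbar x, hx⟩)
    -- the admissible vector and the analyzing vector Ψ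
    (ψ : Lp ℂ 2 ν)
    (hadm : ∀ f h : Lp ℂ 2 ν,
      ⟪h, f⟫_ℂ = ∫ g : G, ⟪π g ψ, f⟫_ℂ * ⟪h, π g ψ⟫_ℂ ∂μ)
    (hQψ : Q ψ ∈ I.domain) (Ψ : Lp ℂ 2 νΞ) (hΨ : Ψ = I ⟨Q ψ, hQψ⟩) :
    ∀ f : Rbar.domain,
      (∀ g : G, ⟪π g ψ, (f : Lp ℂ 2 ν)⟫_ℂ = (χ g : ℂ) * ⟪πh g Ψ, Rbar f⟫_ℂ) ∧
      ‖(f : Lp ℂ 2 ν)‖ ^ 2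
        = ∫ g : G, (χ g) ^ 2 * ‖(⟪πh g Ψ, Rbar f⟫_ℂ)‖ ^ 2 ∂μ ∧
      (∀ h : Lp ℂ 2 ν,
        ⟪h, (f : Lp ℂ 2 ν)⟫_ℂ
          = ∫ g : G, (χ g : ℂ) * ⟪πh g Ψ, Rbar f⟫_ℂ * ⟪h, π g ψ⟫_ℂ ∂μ) :=
  radon_inversion_formula_general μ ν νΞ π πh χ hχpos Rbar Q hQint I hIsa hIsemi hQR ψ hadm hQψ Ψ hΨ
end

section
/- Let ψ ∈ L²(ℝ²) satisfy |Fψ(ξ)| = O(|ξ|^{-L}) for every L > 0 and the SIM(2) admissibility condition ∫_{[0,2π)×ℝ⁺}|Fψ(A_aR_φ^{-1}ξ)|² dφ da/a = 1. Then the function z(ξ) = ∫_{[0,2π)×[1,∞)} |Fψ(A_a R_φ^{-1}ξ)|² dφ da/a satisfies 0 ≤ z(ξ) ≤ 1 and z(ξ) = O(|ξ|^{-2L}) for every L > 0; consequently 1 − ∫_{[0,2π)×(0,1)}|Fψ(A_aR_φ^{-1}ξ)|² dφ da/a = z(ξ) admits a nonnegative square root of rapid decay. -/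
/-!
Splitting `a ∈ (0, ∞)` at `a = 1` writes the admissibility integral `1` as the sum of two
nonnegative integrals, which gives both `z ≤ 1` and the identity. For the decay,
`|A_a R_φ⁻¹ ξ| = a |ξ|`, so on `a ≥ 1` the integrand is at most `C² |ξ|^{-2L} a^{-2L-1}`,
whose integral over `[0, 2π) × [1, ∞)` is `π C² |ξ|^{-2L} / L`.
-/

open MeasureTheory Set
open scoped ENNReal

open Real

lemma lintegral_Ici_one_rpow_neg {s : ℝ} (hs : 0 < s) :
    ∫⁻ a in Ici (1 : ℝ), ENNReal.ofReal (a ^ (-(s + 1))) = ENNReal.ofReal (1 / s) := by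
  have hlt : -(s + 1) < -1 := by linarith
  have hnonneg : 0 ≤ᵐ[volume.restrict (Ioi (1 : ℝ))] fun a : ℝ => a ^ (-(s + 1)) :=
    (ae_restrict_mem measurableSet_Ioi).mono fun a (ha : 1 < a) => rpow_nonneg (by linarith) _
  rw [← restrict_Ioi_eq_restrict_Ici, ← ofReal_integral_eq_lintegral_ofReal
    (integrableOn_Ioi_rpow_of_lt hlt one_pos) hnonneg, integral_Ioi_rpow_of_lt hlt one_pos,
    one_rpow, show -(s + 1) + 1 = -s by ring]
  congr 1
  field_simp

lemma setLIntegral_prod_snd {α β : Type*} [MeasurableSpace α] [MeasurableSpace β]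
    {μ : Measure α} {ν : Measure β} [SFinite μ] [SFinite ν] (s : Set α) (t : Set β)
    {f : β → ℝ≥0∞} (hf : Measurable f) :
    ∫⁻ p in s ×ˢ t, f p.2 ∂μ.prod ν = μ s * ∫⁻ b in t, f b ∂ν := by
  rw [setLIntegral_prod (fun p => f p.2) (hf.comp measurable_snd).aemeasurable]
  simp only [lintegral_const, Measure.restrict_apply_univ, mul_comm]

lemma setLIntegral_prod_Ioi_eq_add {α : Type*} [MeasurableSpace α] {μ : Measure (α × ℝ)}
    (f : α × ℝ → ℝ≥0∞) {s : Set α} (hs : MeasurableSet s) {a b : ℝ} (hab : a < b) :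
    ∫⁻ p in s ×ˢ Ioi a, f p ∂μ =
      (∫⁻ p in s ×ˢ Ioo a b, f p ∂μ) + ∫⁻ p in s ×ˢ Ici b, f p ∂μ := by
  rw [← Ioo_union_Ici_eq_Ioi hab, prod_union]
  refine lintegral_union (hs.prod measurableSet_Ici) ?_
  exact Disjoint.set_prod_right ((Iio_disjoint_Ici le_rfl).mono_left Ioo_subset_Iio_self) _ _

lemma sqrt_sq_add_sq_pos {ξ : ℝ × ℝ} (hξ : ξ ≠ 0) : 0 < √(ξ.1 ^ 2 + ξ.2 ^ 2) := by
  refine sqrt_pos.mpr ?_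
  by_contra! h
  have h1 : ξ.1 = 0 := by nlinarith [sq_nonneg ξ.1, sq_nonneg ξ.2]
  have h2 : ξ.2 = 0 := by nlinarith [sq_nonneg ξ.1, sq_nonneg ξ.2]
  exact hξ (Prod.ext h1 h2)

lemma rpow_neg_mul_sq_mul_inv {a r : ℝ} (ha : 0 < a) (hr : 0 ≤ r) (C L : ℝ) :
    (C * (a * r) ^ (-L)) ^ 2 * a⁻¹ = C ^ 2 * r ^ (-(2 * L)) * a ^ (-(2 * L + 1)) := by
  have hsq : ∀ x : ℝ, 0 ≤ x → (x ^ (-L)) ^ 2 = x ^ (-(2 * L)) := fun x hx => by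
    rw [← rpow_natCast, ← rpow_mul hx]; ring_nf
  rw [mul_rpow ha.le hr, mul_pow, mul_pow, hsq a ha.le, hsq r hr, neg_add, rpow_add ha,
    rpow_neg_one]
  ring

/-- The point `A_a R_φ⁻¹ ξ`, where `p = (φ, a)`. -/
noncomputable def dilateRotate (ξ p : ℝ × ℝ) : ℝ × ℝ :=
  (p.2 * (cos p.1 * ξ.1 + sin p.1 * ξ.2), p.2 * (-sin p.1 * ξ.1 + cos p.1 * ξ.2))

lemma sq_add_sq_dilateRotate (ξ p : ℝ × ℝ) :
    (dilateRotate ξ p).1 ^ 2 + (dilateRotate ξ p).2 ^ 2 = p.2 ^ 2 * (ξ.1 ^ 2 + ξ.2 ^ 2) := by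
  simp only [dilateRotate]
  linear_combination (p.2 ^ 2 * (ξ.1 ^ 2 + ξ.2 ^ 2)) * cos_sq_add_sin_sq p.1

lemma sqrt_sq_add_sq_dilateRotate (ξ : ℝ × ℝ) {p : ℝ × ℝ} (hp : 0 ≤ p.2) :
    √((dilateRotate ξ p).1 ^ 2 + (dilateRotate ξ p).2 ^ 2) =
      p.2 * √(ξ.1 ^ 2 + ξ.2 ^ 2) := by
  rw [sq_add_sq_dilateRotate, sqrt_mul (sq_nonneg _), sqrt_sq hp]

lemma dilateRotate_ne_zero {ξ p : ℝ × ℝ} (hξ : ξ ≠ 0) (hp : 0 < p.2) :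
    dilateRotate ξ p ≠ 0 := by
  have hpos : 0 < √((dilateRotate ξ p).1 ^ 2 + (dilateRotate ξ p).2 ^ 2) := by
    rw [sqrt_sq_add_sq_dilateRotate ξ hp.le]
    exact mul_pos hp (sqrt_sq_add_sq_pos hξ)
  intro h
  simp [h] at hpos

section simDensity

variable {E : Type*} [NormedAddCommGroup E]

/-- The admissibility integrand `|g(A_a R_φ⁻¹ ξ)|² / a`, with respect to `dφ da`. -/
noncomputable def simDensity (g : ℝ × ℝ → E) (ξ p : ℝ × ℝ) : ℝ≥0∞ :=
  (‖g (dilateRotate ξ p)‖₊ : ℝ≥0∞) ^ 2 * (ENNReal.ofReal p.2)⁻¹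

variable {g : ℝ × ℝ → E} {C L : ℝ}

lemma simDensity_le_of_decay
    (hdecay : ∀ η : ℝ × ℝ, η ≠ 0 → ‖g η‖ ≤ C * √(η.1 ^ 2 + η.2 ^ 2) ^ (-L))
    {ξ p : ℝ × ℝ} (hξ : ξ ≠ 0) (hp : 0 < p.2) :
    simDensity g ξ p ≤
      ENNReal.ofReal (C ^ 2 * √(ξ.1 ^ 2 + ξ.2 ^ 2) ^ (-(2 * L)) * p.2 ^ (-(2 * L + 1))) := by
  have hbound := hdecay _ (dilateRotate_ne_zero hξ hp)
  rw [sqrt_sq_add_sq_dilateRotate ξ hp.le] at hbound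
  rw [← rpow_neg_mul_sq_mul_inv hp (sqrt_nonneg _), ENNReal.ofReal_mul (sq_nonneg _),
    ENNReal.ofReal_pow ((norm_nonneg _).trans hbound), ENNReal.ofReal_inv_of_pos hp, simDensity,
    ← enorm_eq_nnnorm, ← ofReal_norm]
  gcongr

lemma setLIntegral_simDensity_Ici_one_le (hL : 0 < L)
    (hdecay : ∀ η : ℝ × ℝ, η ≠ 0 → ‖g η‖ ≤ C * √(η.1 ^ 2 + η.2 ^ 2) ^ (-L))
    {ξ : ℝ × ℝ} (hξ : ξ ≠ 0) :
    ∫⁻ p in Ico 0 (2 * π) ×ˢ Ici (1 : ℝ), simDensity g ξ p ≤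
      ENNReal.ofReal (π * C ^ 2 / L * √(ξ.1 ^ 2 + ξ.2 ^ 2) ^ (-(2 * L))) := by
  set K := C ^ 2 * √(ξ.1 ^ 2 + ξ.2 ^ 2) ^ (-(2 * L))
  have hK : 0 ≤ K := by positivity
  set bound : ℝ → ℝ≥0∞ := fun a => ENNReal.ofReal (K * a ^ (-(2 * L + 1)))
  calc ∫⁻ p in Ico 0 (2 * π) ×ˢ Ici (1 : ℝ), simDensity g ξ p
      ≤ ∫⁻ p in Ico 0 (2 * π) ×ˢ Ici (1 : ℝ), bound p.2 :=
        setLIntegral_mono (by fun_prop) fun p hp =>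
          simDensity_le_of_decay hdecay hξ (zero_lt_one.trans_le hp.2)
    _ = ENNReal.ofReal (2 * π) * ∫⁻ a in Ici (1 : ℝ), bound a := by
        rw [Measure.volume_eq_prod, setLIntegral_prod_snd _ _ (by fun_prop), Real.volume_Ico,
          sub_zero]
    _ = ENNReal.ofReal (2 * π) * (ENNReal.ofReal K * ENNReal.ofReal (1 / (2 * L))) := by
        simp only [bound, ENNReal.ofReal_mul hK]
        rw [lintegral_const_mul _ (by fun_prop), lintegral_Ici_one_rpow_neg (by positivity)]
    _ = ENNReal.ofReal (π * C ^ 2 / L * √(ξ.1 ^ 2 + ξ.2 ^ 2) ^ (-(2 * L))) := by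
        rw [← ENNReal.ofReal_mul hK, ← ENNReal.ofReal_mul (by positivity)]
        congr 1
        field_simp
        ring

end simDensity

theorem cutoff_function_exists_general (ψ : ℝ × ℝ → ℂ)
    (hdecay : ∀ L : ℝ, 0 < L → ∃ C : ℝ, 0 < C ∧ ∀ ξ : ℝ × ℝ, ξ ≠ 0 →
      ‖FT2 ψ ξ‖ ≤ C * Real.sqrt (ξ.1 ^ 2 + ξ.2 ^ 2) ^ (-L))
    (hadm : ∀ ξ : ℝ × ℝ, ξ ≠ 0 →
      ∫⁻ p in Ico 0 (2 * Real.pi) ×ˢ Ioi (0 : ℝ),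
        (‖FT2 ψ (p.2 * (Real.cos p.1 * ξ.1 + Real.sin p.1 * ξ.2),
                 p.2 * (-Real.sin p.1 * ξ.1 + Real.cos p.1 * ξ.2))‖₊ : ℝ≥0∞) ^ 2
          * (ENNReal.ofReal p.2)⁻¹ = 1) :
    (∀ ξ : ℝ × ℝ, ξ ≠ 0 →
      (∫⁻ p in Ico 0 (2 * Real.pi) ×ˢ Ici (1 : ℝ),
        (‖FT2 ψ (p.2 * (Real.cos p.1 * ξ.1 + Real.sin p.1 * ξ.2),
                 p.2 * (-Real.sin p.1 * ξ.1 + Real.cos p.1 * ξ.2))‖₊ : ℝ≥0∞) ^ 2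
          * (ENNReal.ofReal p.2)⁻¹) ≤ 1 ∧
      (∫⁻ p in Ico 0 (2 * Real.pi) ×ˢ Ioo (0 : ℝ) 1,
        (‖FT2 ψ (p.2 * (Real.cos p.1 * ξ.1 + Real.sin p.1 * ξ.2),
                 p.2 * (-Real.sin p.1 * ξ.1 + Real.cos p.1 * ξ.2))‖₊ : ℝ≥0∞) ^ 2
          * (ENNReal.ofReal p.2)⁻¹)
        + (∫⁻ p in Ico 0 (2 * Real.pi) ×ˢ Ici (1 : ℝ),
        (‖FT2 ψ (p.2 * (Real.cos p.1 * ξ.1 + Real.sin p.1 * ξ.2),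
                 p.2 * (-Real.sin p.1 * ξ.1 + Real.cos p.1 * ξ.2))‖₊ : ℝ≥0∞) ^ 2
          * (ENNReal.ofReal p.2)⁻¹) = 1) ∧
    (∀ L : ℝ, 0 < L → ∃ C : ℝ, 0 < C ∧ ∀ ξ : ℝ × ℝ, ξ ≠ 0 →
      (∫⁻ p in Ico 0 (2 * Real.pi) ×ˢ Ici (1 : ℝ),
        (‖FT2 ψ (p.2 * (Real.cos p.1 * ξ.1 + Real.sin p.1 * ξ.2),
                 p.2 * (-Real.sin p.1 * ξ.1 + Real.cos p.1 * ξ.2))‖₊ : ℝ≥0∞) ^ 2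
          * (ENNReal.ofReal p.2)⁻¹)
        ≤ ENNReal.ofReal (C * Real.sqrt (ξ.1 ^ 2 + ξ.2 ^ 2) ^ (-(2 * L)))) := by
  have hsplit : ∀ ξ : ℝ × ℝ, ξ ≠ 0 →
      (∫⁻ p in Ico 0 (2 * π) ×ˢ Ioo (0 : ℝ) 1, simDensity (FT2 ψ) ξ p)
        + ∫⁻ p in Ico 0 (2 * π) ×ˢ Ici (1 : ℝ), simDensity (FT2 ψ) ξ p = 1 := fun ξ hξ =>
    (setLIntegral_prod_Ioi_eq_add _ measurableSet_Ico zero_lt_one).symm.trans (hadm ξ hξ)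
  refine ⟨fun ξ hξ => ⟨le_add_self.trans_eq (hsplit ξ hξ), hsplit ξ hξ⟩, fun L hL => ?_⟩
  obtain ⟨C, hC, hCdecay⟩ := hdecay L hL
  exact ⟨π * C ^ 2 / L, by positivity,
    fun ξ hξ => setLIntegral_simDensity_Ici_one_le hL hCdecay hξ⟩

/-- Let `ψ ∈ L²(ℝ²)` satisfy `|Fψ(ξ)| = O(|ξ|^{-L})` for every `L > 0` and the `SIM(2)`
admissibility condition `∫_{[0,2π)×ℝ⁺}|Fψ(A_a R_φ⁻¹ ξ)|² dφ da/a = 1`. Then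
`z(ξ) = ∫_{[0,2π)×[1,∞)} |Fψ(A_a R_φ⁻¹ ξ)|² dφ da/a` satisfies `0 ≤ z(ξ) ≤ 1`,
`1 - ∫_{[0,2π)×(0,1)} |Fψ(A_a R_φ⁻¹ ξ)|² dφ da/a = z(ξ)`, and `z(ξ) = O(|ξ|^{-2L})` for every
`L > 0` (so `z` admits a nonnegative square root of rapid decay). -/
theorem cutoff_function_exists (ψ : ℝ × ℝ → ℂ)
    (hψ1 : Integrable ψ) (hψ2 : MemLp ψ 2)
    (hdecay : ∀ L : ℝ, 0 < L → ∃ C : ℝ, 0 < C ∧ ∀ ξ : ℝ × ℝ, ξ ≠ 0 →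
      ‖FT2 ψ ξ‖ ≤ C * Real.sqrt (ξ.1 ^ 2 + ξ.2 ^ 2) ^ (-L))
    (hadm : ∀ ξ : ℝ × ℝ, ξ ≠ 0 →
      ∫⁻ p in Ico 0 (2 * Real.pi) ×ˢ Ioi (0 : ℝ),
        (‖FT2 ψ (p.2 * (Real.cos p.1 * ξ.1 + Real.sin p.1 * ξ.2),
                 p.2 * (-Real.sin p.1 * ξ.1 + Real.cos p.1 * ξ.2))‖₊ : ℝ≥0∞) ^ 2
          * (ENNReal.ofReal p.2)⁻¹ = 1) :
    (∀ ξ : ℝ × ℝ, ξ ≠ 0 →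
      (∫⁻ p in Ico 0 (2 * Real.pi) ×ˢ Ici (1 : ℝ),
        (‖FT2 ψ (p.2 * (Real.cos p.1 * ξ.1 + Real.sin p.1 * ξ.2),
                 p.2 * (-Real.sin p.1 * ξ.1 + Real.cos p.1 * ξ.2))‖₊ : ℝ≥0∞) ^ 2
          * (ENNReal.ofReal p.2)⁻¹) ≤ 1 ∧
      (∫⁻ p in Ico 0 (2 * Real.pi) ×ˢ Ioo (0 : ℝ) 1,
        (‖FT2 ψ (p.2 * (Real.cos p.1 * ξ.1 + Real.sin p.1 * ξ.2),
                 p.2 * (-Real.sin p.1 * ξ.1 + Real.cos p.1 * ξ.2))‖₊ : ℝ≥0∞) ^ 2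
          * (ENNReal.ofReal p.2)⁻¹)
        + (∫⁻ p in Ico 0 (2 * Real.pi) ×ˢ Ici (1 : ℝ),
        (‖FT2 ψ (p.2 * (Real.cos p.1 * ξ.1 + Real.sin p.1 * ξ.2),
                 p.2 * (-Real.sin p.1 * ξ.1 + Real.cos p.1 * ξ.2))‖₊ : ℝ≥0∞) ^ 2
          * (ENNReal.ofReal p.2)⁻¹) = 1) ∧
    (∀ L : ℝ, 0 < L → ∃ C : ℝ, 0 < C ∧ ∀ ξ : ℝ × ℝ, ξ ≠ 0 →
      (∫⁻ p in Ico 0 (2 * Real.pi) ×ˢ Ici (1 : ℝ),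
        (‖FT2 ψ (p.2 * (Real.cos p.1 * ξ.1 + Real.sin p.1 * ξ.2),
                 p.2 * (-Real.sin p.1 * ξ.1 + Real.cos p.1 * ξ.2))‖₊ : ℝ≥0∞) ^ 2
          * (ENNReal.ofReal p.2)⁻¹)
        ≤ ENNReal.ofReal (C * Real.sqrt (ξ.1 ^ 2 + ξ.2 ^ 2) ^ (-(2 * L)))) :=
  cutoff_function_exists_general ψ hdecay hadm
end
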